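/- arXiv:2105.02073 — 7 statements merged into one kernel-verified Lean document; each statement's English description precedes it below -/
import Mathlib

section
/- Let X and Y be Polish spaces and c a positive cost function on X × Y (i.e., additionally c(z₁,z₂) > 0 whenever z₁ ≠ z₂). Then for any probability measure γ on X × Y, the transport dependency satisfies τ_c(γ) = 0 if and only if γ = μ ⊗ ν is a product measure, i.e., if and only if γ equals the product of its two marginals. -/
open MeasureTheory ENNReal Filter Topology

/-- The optimal transport cost between two measures `μ` and `ν` on a space `Z`
with base cost `c`: the infimum of `∫ c dπ` over all couplings `π` of `μ` and `ν`. -/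
noncomputable def otCost {Z : Type*} [MeasurableSpace Z]
    (c : Z → Z → ℝ≥0∞) (μ ν : Measure Z) : ℝ≥0∞ :=
  ⨅ (π : Measure (Z × Z)) (_ : π.map Prod.fst = μ ∧ π.map Prod.snd = ν),
    ∫⁻ p, c p.1 p.2 ∂π

/-- The transport dependency of a measure `γ` on `X × Y`: the optimal transport cost
between `γ` and the product of its marginals. -/
noncomputable def tdep {X Y : Type*} [MeasurableSpace X] [MeasurableSpace Y]
    (c : X × Y → X × Y → ℝ≥0∞) (γ : Measure (X × Y)) : ℝ≥0∞ :=
  otCost c γ ((γ.map Prod.fst).prod (γ.map Prod.snd))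

/-!
If `τ_c(γ) = 0`, there are couplings of `γ` and `μ ⊗ ν` of arbitrarily small cost. Fix a complete
metric on `X × Y`. By tightness, all but `ε` of the mass of such a coupling lies on `L × L` with `L`
compact; on the compact set of pairs in `L × L` at distance `≥ r` the lower semicontinuous, positive
cost is bounded below by some `m > 0`, so those pairs carry little mass. Hence the Lévy–Prokhorov
distance between `γ` and `μ ⊗ ν` vanishes and the two measures coincide.
Conversely, the diagonal coupling of `γ` with itself has zero cost.
-/

open Set Metric

lemma IsCompact.exists_pos_le_of_lowerSemicontinuousOn {α : Type*} [TopologicalSpace α]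
    {f : α → ℝ≥0∞} {S : Set α} (hS : IsCompact S) (hf : LowerSemicontinuousOn f S)
    (hpos : ∀ z ∈ S, 0 < f z) : ∃ m, 0 < m ∧ ∀ z ∈ S, m ≤ f z := by
  rcases S.eq_empty_or_nonempty with rfl | hne
  · exact ⟨1, one_pos, by simp⟩
  obtain ⟨a, ha, hmin⟩ := hf.exists_isMinOn hne hS
  exact ⟨f a, hpos a ha, hmin⟩

lemma exists_coupling_measure_lt_of_otCost_eq_zero {Z : Type*} [TopologicalSpace Z]
    [MeasurableSpace Z] [OpensMeasurableSpace (Z × Z)] {c : Z → Z → ℝ≥0∞}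
    (hc : LowerSemicontinuous (Function.uncurry c)) {μ ν : Measure Z} (h : otCost c μ ν = 0)
    {S : Set (Z × Z)} (hS : IsCompact S) (hpos : ∀ p ∈ S, 0 < c p.1 p.2)
    {ε : ℝ≥0∞} (hε : 0 < ε) :
    ∃ π : Measure (Z × Z), π.map Prod.fst = μ ∧ π.map Prod.snd = ν ∧ π S < ε := by
  obtain ⟨m, hm, hmS⟩ :=
    hS.exists_pos_le_of_lowerSemicontinuousOn (hc.lowerSemicontinuousOn S) hpos
  have hlt : otCost c μ ν < m * ε := h ▸ ENNReal.mul_pos hm.ne' hε.ne'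
  obtain ⟨π, ⟨hπ₁, hπ₂⟩, hπ⟩ : ∃ π : Measure (Z × Z),
      (π.map Prod.fst = μ ∧ π.map Prod.snd = ν) ∧ ∫⁻ p, c p.1 p.2 ∂π < m * ε := by
    simpa only [otCost, iInf_lt_iff, exists_prop] using hlt
  refine ⟨π, hπ₁, hπ₂, lt_of_mul_lt_mul_left' (a := m) (lt_of_le_of_lt ?_ hπ)⟩
  calc m * π S ≤ m * π {p | m ≤ Function.uncurry c p} := by gcongr; exact hmS
    _ ≤ ∫⁻ p, c p.1 p.2 ∂π := mul_meas_ge_le_lintegral₀ hc.measurable.aemeasurable m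

lemma map_fst_le_map_snd_thickening_add {Z : Type*} [PseudoMetricSpace Z] [MeasurableSpace Z]
    [OpensMeasurableSpace Z] (π : Measure (Z × Z)) {B : Set Z} (hB : MeasurableSet B) (r : ℝ) :
    π.map Prod.fst B ≤ π.map Prod.snd (thickening r B) + π {p | r ≤ dist p.1 p.2} := by
  have hsub : Prod.fst ⁻¹' B ⊆ Prod.snd ⁻¹' thickening r B ∪ {p | r ≤ dist p.1 p.2} := by
    rintro ⟨x, y⟩ hx
    by_cases hr : r ≤ dist x y
    · exact Or.inr hr
    · exact Or.inl (mem_thickening_iff.2 ⟨x, hx, by rw [dist_comm]; exact lt_of_not_ge hr⟩)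
  rw [Measure.map_apply measurable_fst hB,
    Measure.map_apply measurable_snd isOpen_thickening.measurableSet]
  exact (measure_mono hsub).trans (measure_union_le _ _)

lemma exists_coupling_measure_le_dist_lt_of_otCost_eq_zero {Z : Type*} [PseudoMetricSpace Z]
    [SecondCountableTopology Z] [TopologicalSpace.IsCompletelyPseudoMetrizableSpace Z]
    [MeasurableSpace Z] [BorelSpace Z] {c : Z → Z → ℝ≥0∞}
    (hc : LowerSemicontinuous (Function.uncurry c)) (hpos : ∀ z₁ z₂, z₁ ≠ z₂ → 0 < c z₁ z₂)
    {μ ν : Measure Z} [IsFiniteMeasure μ] [IsFiniteMeasure ν] (h : otCost c μ ν = 0)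
    {r : ℝ} (hr : 0 < r) {ε : ℝ≥0∞} (hε : 0 < ε) :
    ∃ π : Measure (Z × Z), π.map Prod.fst = μ ∧ π.map Prod.snd = ν ∧
      π {p | r ≤ dist p.1 p.2} < ε := by
  obtain ⟨K, hK, hKε⟩ :=
    exists_isCompact_closure_measure_compl_lt (μ + ν) (ε / 2) (ENNReal.half_pos hε.ne')
  set L := closure K
  set S := L ×ˢ L ∩ {p : Z × Z | r ≤ dist p.1 p.2}
  have hS : IsCompact S :=
    (hK.prod hK).inter_right (isClosed_le continuous_const continuous_dist)
  obtain ⟨π, hπ₁, hπ₂, hπS⟩ := exists_coupling_measure_lt_of_otCost_eq_zero hc h hS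
    (fun p hp => hpos _ _ fun he => (hr.trans_le hp.2).ne' (he ▸ dist_self p.1))
    (ENNReal.half_pos hε.ne')
  refine ⟨π, hπ₁, hπ₂, ?_⟩
  have hsub : {p : Z × Z | r ≤ dist p.1 p.2} ⊆ S ∪ (Prod.fst ⁻¹' Lᶜ ∪ Prod.snd ⁻¹' Lᶜ) := by
    intro p hp
    by_cases hpL : p ∈ L ×ˢ L
    · exact Or.inl ⟨hpL, hp⟩
    · right
      simpa only [mem_prod, not_and_or, mem_union, mem_preimage, mem_compl_iff] using hpL
  have hout : π (Prod.fst ⁻¹' Lᶜ ∪ Prod.snd ⁻¹' Lᶜ) < ε / 2 := calc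
    _ ≤ π (Prod.fst ⁻¹' Lᶜ) + π (Prod.snd ⁻¹' Lᶜ) := measure_union_le _ _
    _ ≤ μ Lᶜ + ν Lᶜ := by
      rw [← hπ₁, ← hπ₂]
      exact add_le_add (Measure.le_map_apply measurable_fst.aemeasurable _)
        (Measure.le_map_apply measurable_snd.aemeasurable _)
    _ ≤ (μ + ν) Kᶜ := measure_mono (compl_subset_compl.2 subset_closure)
    _ < ε / 2 := hKε
  calc π {p | r ≤ dist p.1 p.2} ≤ π S + π (Prod.fst ⁻¹' Lᶜ ∪ Prod.snd ⁻¹' Lᶜ) :=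
        (measure_mono hsub).trans (measure_union_le _ _)
    _ < ε / 2 + ε / 2 := ENNReal.add_lt_add hπS hout
    _ = ε := ENNReal.add_halves ε

lemma levyProkhorovEDist_eq_zero_of_otCost_eq_zero {Z : Type*} [PseudoMetricSpace Z]
    [SecondCountableTopology Z] [TopologicalSpace.IsCompletelyPseudoMetrizableSpace Z]
    [MeasurableSpace Z] [BorelSpace Z] {c : Z → Z → ℝ≥0∞}
    (hc : LowerSemicontinuous (Function.uncurry c)) (hpos : ∀ z₁ z₂, z₁ ≠ z₂ → 0 < c z₁ z₂)
    {μ ν : Measure Z} [IsProbabilityMeasure μ] [IsProbabilityMeasure ν] (h : otCost c μ ν = 0) :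
    levyProkhorovEDist μ ν = 0 := by
  refine le_antisymm (levyProkhorovEDist_le_of_forall_le μ ν 0 fun ε B hε hε_top hB => ?_) zero_le
  obtain ⟨π, hπ₁, hπ₂, hπ⟩ := exists_coupling_measure_le_dist_lt_of_otCost_eq_zero hc hpos h
    (toReal_pos hε.ne' hε_top.ne) hε
  calc μ B = π.map Prod.fst B := by rw [hπ₁]
    _ ≤ π.map Prod.snd (thickening ε.toReal B) + π {p | ε.toReal ≤ dist p.1 p.2} :=
      map_fst_le_map_snd_thickening_add π hB _
    _ ≤ ν (thickening ε.toReal B) + ε := by rw [hπ₂]; gcongr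

lemma eq_of_levyProkhorovEDist_eq_zero {Z : Type*} [PseudoMetricSpace Z]
    [MeasurableSpace Z] [BorelSpace Z] {μ ν : Measure Z} [hμ : IsProbabilityMeasure μ]
    [hν : IsProbabilityMeasure ν] (h : levyProkhorovEDist μ ν = 0) : μ = ν := by
  let P : LevyProkhorov (ProbabilityMeasure Z) := .ofMeasure ⟨μ, hμ⟩
  let Q : LevyProkhorov (ProbabilityMeasure Z) := .ofMeasure ⟨ν, hν⟩
  exact congrArg (fun R => R.toMeasure.toMeasure) (edist_eq_zero.1 h : P = Q)

lemma otCost_self_eq_zero {Z : Type*} [MeasurableSpace Z] {c : Z → Z → ℝ≥0∞}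
    (hc : ∀ z, c z z = 0) (μ : Measure Z) : otCost c μ μ = 0 := by
  have hdiag : Measurable fun z : Z => (z, z) := measurable_id.prodMk measurable_id
  have hfst : (μ.map fun z => (z, z)).map Prod.fst = μ := by
    rw [Measure.map_map measurable_fst hdiag]; exact Measure.map_id
  have hsnd : (μ.map fun z => (z, z)).map Prod.snd = μ := by
    rw [Measure.map_map measurable_snd hdiag]; exact Measure.map_id
  refine le_antisymm ((iInf₂_le _ ⟨hfst, hsnd⟩).trans ?_) zero_le
  exact (lintegral_map_le _ _).trans_eq (by simp [hc])

theorem tdep_eq_zero_iff_prod_general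
    {X Y : Type*} [TopologicalSpace X] [PolishSpace X] [MeasurableSpace X] [BorelSpace X]
    [TopologicalSpace Y] [PolishSpace Y] [MeasurableSpace Y] [BorelSpace Y]
    (c : X × Y → X × Y → ℝ≥0∞)
    (hc_lsc : LowerSemicontinuous (Function.uncurry c))
    (hc_diag : ∀ z, c z z = 0)
    (hc_pos : ∀ z₁ z₂, z₁ ≠ z₂ → 0 < c z₁ z₂)
    (γ : Measure (X × Y)) [IsProbabilityMeasure γ] :
    tdep c γ = 0 ↔ γ = (γ.map Prod.fst).prod (γ.map Prod.snd) := by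
  have := Measure.isProbabilityMeasure_map (μ := γ) measurable_fst.aemeasurable
  have := Measure.isProbabilityMeasure_map (μ := γ) measurable_snd.aemeasurable
  refine ⟨fun h => ?_, fun h => ?_⟩
  · let _ := TopologicalSpace.upgradeIsCompletelyMetrizable (X × Y)
    exact eq_of_levyProkhorovEDist_eq_zero
      (levyProkhorovEDist_eq_zero_of_otCost_eq_zero hc_lsc hc_pos h)
  · rw [tdep, ← h]
    exact otCost_self_eq_zero hc_diag γ

/-- For a positive cost function `c` on `X × Y` (Polish spaces),
the transport dependency of a probability measure `γ` vanishes if and only if `γ`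
is the product of its marginals. -/
theorem tdep_eq_zero_iff_prod
    {X Y : Type*} [TopologicalSpace X] [PolishSpace X] [MeasurableSpace X] [BorelSpace X]
    [TopologicalSpace Y] [PolishSpace Y] [MeasurableSpace Y] [BorelSpace Y]
    (c : X × Y → X × Y → ℝ≥0∞)
    (hc_lsc : LowerSemicontinuous (Function.uncurry c))
    (hc_symm : ∀ z₁ z₂, c z₁ z₂ = c z₂ z₁)
    (hc_diag : ∀ z, c z z = 0)
    (hc_pos : ∀ z₁ z₂, z₁ ≠ z₂ → 0 < c z₁ z₂)
    (γ : Measure (X × Y)) [IsProbabilityMeasure γ] :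
    tdep c γ = 0 ↔ γ = (γ.map Prod.fst).prod (γ.map Prod.snd) :=
  tdep_eq_zero_iff_prod_general c hc_lsc hc_diag hc_pos γ
end

section
/- Let X and Y be Polish spaces, c a cost function on X × Y, and fix μ a probability measure on X. Then the transport dependency τ_c is convex on the set of probability measures on X × Y whose first marginal equals μ: for any two such measures γ₀, γ₁ and any t ∈ [0,1], τ_c((1−t)γ₀ + tγ₁) ≤ (1−t)τ_c(γ₀) + tτ_c(γ₁). The analogous statement holds for the set of measures with fixed second marginal ν. -/
open MeasureTheory ENNReal Filter Topology

/-! Couplings can be added and scaled, so the transport cost is jointly subadditive and positively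
homogeneous in its two marginals. If `γ₀` and `γ₁` share one marginal, the product of the
marginals of `(1 - t) • γ₀ + t • γ₁` is the same convex combination of the products of the
marginals of `γ₀` and `γ₁`, so both arguments of the transport cost defining `tdep` mix linearly. -/

section otCost

variable {Z : Type*} [MeasurableSpace Z] (c : Z → Z → ℝ≥0∞)

lemma otCost_le_lintegral {μ ν : Measure Z} {π : Measure (Z × Z)}
    (hπ : π.map Prod.fst = μ ∧ π.map Prod.snd = ν) :
    otCost c μ ν ≤ ∫⁻ p, c p.1 p.2 ∂π :=
  iInf₂_le π hπ

lemma otCost_add_le (μ₀ ν₀ μ₁ ν₁ : Measure Z) :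
    otCost c (μ₀ + μ₁) (ν₀ + ν₁) ≤ otCost c μ₀ ν₀ + otCost c μ₁ ν₁ := by
  refine ENNReal.le_iInf_add_iInf fun π₀ π₁ ↦ ENNReal.le_iInf_add_iInf fun h₀ h₁ ↦ ?_
  rw [← lintegral_add_measure]
  refine otCost_le_lintegral c ⟨?_, ?_⟩
  · rw [Measure.map_add _ _ measurable_fst, h₀.1, h₁.1]
  · rw [Measure.map_add _ _ measurable_snd, h₀.2, h₁.2]

lemma otCost_smul_le (μ ν : Measure Z) {a : ℝ≥0∞} (ha : a ≠ ∞) :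
    otCost c (a • μ) (a • ν) ≤ a * otCost c μ ν := by
  rcases eq_or_ne a 0 with rfl | ha₀
  · simpa using otCost_le_lintegral c (π := 0) (by simp)
  conv_rhs => rw [otCost, ENNReal.mul_iInf_of_ne ha₀ ha]
  refine le_iInf fun π ↦ ?_
  rw [ENNReal.mul_iInf_of_ne ha₀ ha]
  refine le_iInf fun hπ ↦ ?_
  refine (otCost_le_lintegral c (π := a • π) ⟨?_, ?_⟩).trans_eq (lintegral_smul_measure a _)
  · rw [Measure.map_smul, hπ.1]
  · rw [Measure.map_smul, hπ.2]

lemma otCost_smul_add_smul_le (μ₀ ν₀ μ₁ ν₁ : Measure Z) {a b : ℝ≥0∞} (ha : a ≠ ∞)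
    (hb : b ≠ ∞) :
    otCost c (a • μ₀ + b • μ₁) (a • ν₀ + b • ν₁) ≤ a * otCost c μ₀ ν₀ + b * otCost c μ₁ ν₁ :=
  (otCost_add_le c _ _ _ _).trans <|
    add_le_add (otCost_smul_le c μ₀ ν₀ ha) (otCost_smul_le c μ₁ ν₁ hb)

end otCost

lemma MeasureTheory.Measure.map_smul_add_smul {α β : Type*} [MeasurableSpace α]
    [MeasurableSpace β] {f : α → β} (hf : Measurable f) (μ ν : Measure α) (a b : ℝ≥0∞) :
    (a • μ + b • ν).map f = a • μ.map f + b • ν.map f := by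
  rw [Measure.map_add _ _ hf, Measure.map_smul, Measure.map_smul]

section marginals

variable {X Y : Type*} [MeasurableSpace X] [MeasurableSpace Y]
  (γ₀ γ₁ : Measure (X × Y)) [SFinite γ₀] [SFinite γ₁] {a b : ℝ≥0∞}

lemma prod_marginals_smul_add_smul_of_map_fst_eq (hab : a + b = 1)
    (h : γ₀.map Prod.fst = γ₁.map Prod.fst) :
    ((a • γ₀ + b • γ₁).map Prod.fst).prod ((a • γ₀ + b • γ₁).map Prod.snd)
      = a • (γ₀.map Prod.fst).prod (γ₀.map Prod.snd)
        + b • (γ₁.map Prod.fst).prod (γ₁.map Prod.snd) := by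
  rw [Measure.map_smul_add_smul measurable_fst, Measure.map_smul_add_smul measurable_snd, ← h,
    ← add_smul, hab, one_smul, Measure.prod_add, Measure.prod_smul_right,
    Measure.prod_smul_right]

lemma prod_marginals_smul_add_smul_of_map_snd_eq (hab : a + b = 1)
    (h : γ₀.map Prod.snd = γ₁.map Prod.snd) :
    ((a • γ₀ + b • γ₁).map Prod.fst).prod ((a • γ₀ + b • γ₁).map Prod.snd)
      = a • (γ₀.map Prod.fst).prod (γ₀.map Prod.snd)
        + b • (γ₁.map Prod.fst).prod (γ₁.map Prod.snd) := by
  rw [Measure.map_smul_add_smul measurable_fst, Measure.map_smul_add_smul measurable_snd, ← h,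
    ← add_smul, hab, one_smul, Measure.add_prod, Measure.prod_smul_left,
    Measure.prod_smul_left]

end marginals

theorem tdep_convex_general
    {X Y : Type*} [MeasurableSpace X] [MeasurableSpace Y]
    (c : X × Y → X × Y → ℝ≥0∞)
    (γ₀ γ₁ : Measure (X × Y)) [IsProbabilityMeasure γ₀] [IsProbabilityMeasure γ₁]
    (t : ℝ≥0∞) (ht : t ≤ 1)
    (hmarg : (γ₀.map Prod.fst = γ₁.map Prod.fst) ∨ (γ₀.map Prod.snd = γ₁.map Prod.snd)) :
    tdep c ((1 - t) • γ₀ + t • γ₁) ≤ (1 - t) * tdep c γ₀ + t * tdep c γ₁ := by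
  have hsum : 1 - t + t = 1 := tsub_add_cancel_of_le ht
  have hprod := hmarg.elim (prod_marginals_smul_add_smul_of_map_fst_eq γ₀ γ₁ hsum)
    (prod_marginals_smul_add_smul_of_map_snd_eq γ₀ γ₁ hsum)
  rw [tdep, hprod]
  exact otCost_smul_add_smul_le c _ _ _ _ (sub_ne_top one_ne_top) (ht.trans_lt one_lt_top).ne

/-- The transport dependency is convex on the set of probability
measures on `X × Y` with fixed first marginal `μ`, and likewise on the set of
probability measures with fixed second marginal `ν`. -/
theorem tdep_convex
    {X Y : Type*} [TopologicalSpace X] [PolishSpace X] [MeasurableSpace X] [BorelSpace X]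
    [TopologicalSpace Y] [PolishSpace Y] [MeasurableSpace Y] [BorelSpace Y]
    (c : X × Y → X × Y → ℝ≥0∞)
    (hc_lsc : LowerSemicontinuous (Function.uncurry c))
    (hc_symm : ∀ z₁ z₂, c z₁ z₂ = c z₂ z₁)
    (hc_diag : ∀ z, c z z = 0)
    (γ₀ γ₁ : Measure (X × Y)) [IsProbabilityMeasure γ₀] [IsProbabilityMeasure γ₁]
    (t : ℝ≥0∞) (ht : t ≤ 1)
    (hmarg : (γ₀.map Prod.fst = γ₁.map Prod.fst) ∨ (γ₀.map Prod.snd = γ₁.map Prod.snd)) :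
    tdep c ((1 - t) • γ₀ + t • γ₁) ≤ (1 - t) * tdep c γ₀ + t * tdep c γ₁ :=
  tdep_convex_general c γ₀ γ₁ t ht hmarg
end

section
/- Let X and Y be Polish spaces and let c be a cost function on X × Y of the form c(x₁,y₁,x₂,y₂) = h(c_X(x₁,x₂), c_Y(y₁,y₂)) for marginal cost functions c_X on X and c_Y on Y and a measurable function h : [0,∞]² → [0,∞]. If f_X : X → X and f_Y : Y → Y are measurable maps that leave c_X and c_Y invariant (i.e., c_X(f_X(x₁), f_X(x₂)) = c_X(x₁,x₂) for all x₁,x₂ ∈ X, and similarly for c_Y), then for the map f = f_X × f_Y and any probability measure γ on X × Y, it holds that τ_c(f_*γ) = τ_c(γ). -/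
open MeasureTheory ENNReal Filter Topology

/-! Invariance of the marginal costs makes `c` invariant under `f = f_X × f_Y`, i.e.
`c (f z₁) (f z₂) = c z₁ z₂`. Pushing couplings forward along `f` shows that the transport cost
can only drop. Conversely, a coupling of the pushed-forward marginals lifts back: sample each
coordinate from the conditional distribution of the original marginal on the corresponding
`f`-fiber (this is where the Polish assumption enters); the lifted cost only sees the fibers, so
it is unchanged. Since `f` maps the product of the marginals of `γ` to that of `f_*γ`, the two
transport dependencies coincide. -/

open ProbabilityTheory

namespace MeasureTheory.Measure

variable {α β γ δ : Type*} [MeasurableSpace α] [MeasurableSpace β] [MeasurableSpace γ]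
  [MeasurableSpace δ]

lemma fst_map_prodMap (ρ : Measure (α × γ)) {f : α → β} {g : γ → δ} (hf : Measurable f)
    (hg : Measurable g) : (ρ.map (Prod.map f g)).fst = ρ.fst.map f := by
  rw [fst, fst, map_map measurable_fst (hf.prodMap hg), map_map hf measurable_fst]
  rfl

lemma snd_map_prodMap (ρ : Measure (α × γ)) {f : α → β} {g : γ → δ} (hf : Measurable f)
    (hg : Measurable g) : (ρ.map (Prod.map f g)).snd = ρ.snd.map g := by
  rw [snd, snd, map_map measurable_snd (hf.prodMap hg), map_map hg measurable_snd]
  rfl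

lemma fst_parallelComp_comp (κ : Kernel α β) [IsSFiniteKernel κ] (η : Kernel γ δ)
    [IsMarkovKernel η] (ρ : Measure (α × γ)) : ((κ ∥ₖ η) ∘ₘ ρ).fst = κ ∘ₘ ρ.fst := by
  ext s hs
  rw [fst_apply hs, bind_apply (measurable_fst hs) (Kernel.aemeasurable _),
    bind_apply hs (Kernel.aemeasurable _), fst, lintegral_map (κ.measurable_coe hs) measurable_fst]
  congr with q
  rw [← Set.prod_univ, Kernel.parallelComp_apply_prod, measure_univ, mul_one]

lemma snd_parallelComp_comp (κ : Kernel α β) [IsMarkovKernel κ] (η : Kernel γ δ)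
    [IsSFiniteKernel η] (ρ : Measure (α × γ)) : ((κ ∥ₖ η) ∘ₘ ρ).snd = η ∘ₘ ρ.snd := by
  ext s hs
  rw [snd_apply hs, bind_apply (measurable_snd hs) (Kernel.aemeasurable _),
    bind_apply hs (Kernel.aemeasurable _), snd, lintegral_map (η.measurable_coe hs) measurable_snd]
  congr with q
  rw [← Set.univ_prod, Kernel.parallelComp_apply_prod, measure_univ, one_mul]

end MeasureTheory.Measure

namespace ProbabilityTheory

variable {Z Z' : Type*} [MeasurableSpace Z] [StandardBorelSpace Z] [Nonempty Z]
  [MeasurableSpace Z'] {f : Z → Z'} (μ : Measure Z) [IsFiniteMeasure μ]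

lemma condDistrib_id_comp_map (hf : Measurable f) : condDistrib id f μ ∘ₘ μ.map f = μ := by
  rw [condDistrib_comp_map hf.aemeasurable aemeasurable_id, Measure.map_id]

lemma ae_ae_condDistrib_id_eq [MeasurableEq Z'] (hf : Measurable f) :
    ∀ᵐ b ∂μ.map f, ∀ᵐ z ∂condDistrib id f μ b, f z = b := by
  refine Measure.ae_ae_of_ae_compProd (p := fun q : Z' × Z => f q.2 = q.1) ?_
  rw [compProd_map_condDistrib aemeasurable_id]
  exact (ae_map_iff (hf.prodMk measurable_id).aemeasurable
    (measurableSet_eq_fun (hf.comp measurable_snd) measurable_fst)).2 (ae_of_all _ fun _ => rfl)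

end ProbabilityTheory

section otCost

variable {Z Z' : Type*} [MeasurableSpace Z] [MeasurableSpace Z']

lemma otCost_map_le_otCost_comp (c : Z' → Z' → ℝ≥0∞) (hc : Measurable (Function.uncurry c))
    {f : Z → Z'} (hf : Measurable f) (μ ν : Measure Z) :
    otCost c (μ.map f) (ν.map f) ≤ otCost (fun z₁ z₂ => c (f z₁) (f z₂)) μ ν := by
  refine le_iInf₂ fun π ⟨hπ₁, hπ₂⟩ => (iInf₂_le (π.map (Prod.map f f)) ⟨?_, ?_⟩).trans_eq
    (lintegral_map hc (hf.prodMap hf))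
  · rw [← hπ₁]; exact π.fst_map_prodMap hf hf
  · rw [← hπ₂]; exact π.snd_map_prodMap hf hf

lemma otCost_comp_le_otCost_map [StandardBorelSpace Z] [Nonempty Z] [MeasurableEq Z']
    (c : Z' → Z' → ℝ≥0∞) (hc : Measurable (Function.uncurry c))
    {f : Z → Z'} (hf : Measurable f) (μ ν : Measure Z) [IsFiniteMeasure μ] [IsFiniteMeasure ν] :
    otCost (fun z₁ z₂ => c (f z₁) (f z₂)) μ ν ≤ otCost c (μ.map f) (ν.map f) := by
  refine le_iInf₂ fun π' ⟨hπ'₁, hπ'₂⟩ => ?_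
  set κ := condDistrib id f μ ∥ₖ condDistrib id f ν
  have hmarg₁ : (κ ∘ₘ π').fst = μ := by
    rw [Measure.fst_parallelComp_comp, Measure.fst, hπ'₁, condDistrib_id_comp_map μ hf]
  have hmarg₂ : (κ ∘ₘ π').snd = ν := by
    rw [Measure.snd_parallelComp_comp, Measure.snd, hπ'₂, condDistrib_id_comp_map ν hf]
  have hfiber : ∀ᵐ q ∂π', ∀ᵐ p ∂κ q, f p.1 = q.1 ∧ f p.2 = q.2 := by
    have h₁ := ae_of_ae_map measurable_fst.aemeasurable
      (hπ'₁ ▸ ae_ae_condDistrib_id_eq μ hf)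
    have h₂ := ae_of_ae_map measurable_snd.aemeasurable
      (hπ'₂ ▸ ae_ae_condDistrib_id_eq ν hf)
    filter_upwards [h₁, h₂] with q hq₁ hq₂
    rw [Kernel.parallelComp_apply]
    exact (Measure.quasiMeasurePreserving_fst.ae hq₁).and
      (Measure.quasiMeasurePreserving_snd.ae hq₂)
  refine (iInf₂_le (κ ∘ₘ π') ⟨hmarg₁, hmarg₂⟩).trans_eq ?_
  have hcf : Measurable fun p : Z × Z => c (f p.1) (f p.2) := hc.comp (hf.prodMap hf)
  rw [Measure.lintegral_bind (Kernel.aemeasurable _) hcf.aemeasurable]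
  refine lintegral_congr_ae (hfiber.mono fun q hq => ?_)
  calc ∫⁻ p, c (f p.1) (f p.2) ∂κ q = ∫⁻ _, c q.1 q.2 ∂κ q :=
        lintegral_congr_ae (hq.mono fun p hp => by simp only [hp.1, hp.2])
    _ = c q.1 q.2 := by simp

theorem otCost_comp_eq_otCost_map [StandardBorelSpace Z] [Nonempty Z] [MeasurableEq Z']
    (c : Z' → Z' → ℝ≥0∞) (hc : Measurable (Function.uncurry c))
    {f : Z → Z'} (hf : Measurable f) (μ ν : Measure Z) [IsFiniteMeasure μ] [IsFiniteMeasure ν] :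
    otCost (fun z₁ z₂ => c (f z₁) (f z₂)) μ ν = otCost c (μ.map f) (ν.map f) :=
  (otCost_comp_le_otCost_map c hc hf μ ν).antisymm (otCost_map_le_otCost_comp c hc hf μ ν)

end otCost

theorem tdep_invariant_of_cost_invariant_general
    {X Y : Type*} [TopologicalSpace X] [PolishSpace X] [MeasurableSpace X] [BorelSpace X]
    [TopologicalSpace Y] [PolishSpace Y] [MeasurableSpace Y] [BorelSpace Y]
    (cX : X → X → ℝ≥0∞) (cY : Y → Y → ℝ≥0∞)
    (h : ℝ≥0∞ × ℝ≥0∞ → ℝ≥0∞)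
    (c : X × Y → X × Y → ℝ≥0∞)
    (hc_lsc : LowerSemicontinuous (Function.uncurry c))
    (hc_eq : ∀ z₁ z₂ : X × Y, c z₁ z₂ = h (cX z₁.1 z₂.1, cY z₁.2 z₂.2))
    (fX : X → X) (fY : Y → Y) (hfX : Measurable fX) (hfY : Measurable fY)
    (hinvX : ∀ x₁ x₂, cX (fX x₁) (fX x₂) = cX x₁ x₂)
    (hinvY : ∀ y₁ y₂, cY (fY y₁) (fY y₂) = cY y₁ y₂)
    (γ : Measure (X × Y)) [IsProbabilityMeasure γ] :
    tdep c (γ.map (Prod.map fX fY)) = tdep c γ := by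
  have hf : Measurable (Prod.map fX fY) := hfX.prodMap hfY
  have hinv : (fun z₁ z₂ => c (Prod.map fX fY z₁) (Prod.map fX fY z₂)) = c := by
    funext z₁ z₂
    simp only [hc_eq, Prod.map_fst, Prod.map_snd, hinvX, hinvY]
  have hmarg : ((γ.map (Prod.map fX fY)).fst).prod (γ.map (Prod.map fX fY)).snd
      = (γ.fst.prod γ.snd).map (Prod.map fX fY) := by
    rw [γ.fst_map_prodMap hfX hfY, γ.snd_map_prodMap hfX hfY, Measure.map_prod_map _ _ hfX hfY]
  have : Nonempty (X × Y) := γ.nonempty_of_neZero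
  calc tdep c (γ.map (Prod.map fX fY))
      = otCost c (γ.map (Prod.map fX fY)) ((γ.fst.prod γ.snd).map (Prod.map fX fY)) :=
        congrArg _ hmarg
    _ = otCost (fun z₁ z₂ => c (Prod.map fX fY z₁) (Prod.map fX fY z₂)) γ (γ.fst.prod γ.snd) :=
        (otCost_comp_eq_otCost_map c hc_lsc.measurable hf _ _).symm
    _ = tdep c γ := by rw [hinv]; rfl

/-- If the cost `c` on `X × Y` is a measurable function
`h` of marginal costs `c_X` and `c_Y`, and `f_X`, `f_Y` are measurable maps leaving
`c_X` and `c_Y` invariant, then the transport dependency is invariant under the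
pushforward by `f_X × f_Y`. -/
theorem tdep_invariant_of_cost_invariant
    {X Y : Type*} [TopologicalSpace X] [PolishSpace X] [MeasurableSpace X] [BorelSpace X]
    [TopologicalSpace Y] [PolishSpace Y] [MeasurableSpace Y] [BorelSpace Y]
    (cX : X → X → ℝ≥0∞) (cY : Y → Y → ℝ≥0∞)
    (h : ℝ≥0∞ × ℝ≥0∞ → ℝ≥0∞) (hh : Measurable h)
    (c : X × Y → X × Y → ℝ≥0∞)
    (hc_lsc : LowerSemicontinuous (Function.uncurry c))
    (hc_symm : ∀ z₁ z₂, c z₁ z₂ = c z₂ z₁)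
    (hc_diag : ∀ z, c z z = 0)
    (hc_eq : ∀ z₁ z₂ : X × Y, c z₁ z₂ = h (cX z₁.1 z₂.1, cY z₁.2 z₂.2))
    (fX : X → X) (fY : Y → Y) (hfX : Measurable fX) (hfY : Measurable fY)
    (hinvX : ∀ x₁ x₂, cX (fX x₁) (fX x₂) = cX x₁ x₂)
    (hinvY : ∀ y₁ y₂, cY (fY y₁) (fY y₂) = cY y₁ y₂)
    (γ : Measure (X × Y)) [IsProbabilityMeasure γ] :
    tdep c (γ.map (Prod.map fX fY)) = tdep c γ :=
  tdep_invariant_of_cost_invariant_general cX cY h c hc_lsc hc_eq fX fY hfX hfY hinvX hinvY γ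
end

section
/- Let X and Y be Polish spaces and let c and c_n (n ∈ ℕ) be cost functions on X × Y that satisfy ‖c/c_n − 1‖_∞ → 0 as n → ∞ (with the convention 0/0 = 1, where ‖·‖_∞ denotes the supremum norm). Let (γ_n) be a sequence of probability measures on X × Y and γ a probability measure on X × Y with τ_c(γ) < ∞. If τ_c(γ_n) → τ_c(γ) as n → ∞, then τ_{c_n}(γ_n) → τ_c(γ) as n → ∞. -/
open MeasureTheory ENNReal Filter Topology

/-- `|u / v - 1|` in `ℝ≥0∞`, with the convention `0 / 0 = 1` (so the deviation is `0`
when both `u` and `v` vanish). -/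
noncomputable def ratioDev (u v : ℝ≥0∞) : ℝ≥0∞ :=
  if u = 0 ∧ v = 0 then 0 else (u / v - 1) + (1 - u / v)

lemma ratioDev_bounds {u v ε : ℝ≥0∞} (hε : ε < 1) (h : ratioDev u v ≤ ε) :
    u ≤ (1 + ε) * v ∧ v ≤ (1 - ε)⁻¹ * u := by
  unfold ratioDev at h
  by_cases h0 : u = 0 ∧ v = 0
  · simp [h0.1, h0.2]
  rw [if_neg h0] at h
  have h1 : u / v - 1 ≤ ε := le_trans le_self_add h
  have h2 : 1 - u / v ≤ ε := le_trans le_add_self h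
  rcases eq_or_ne v 0 with hv0 | hv0
  · exfalso
    have hu0 : u ≠ 0 := fun hu => h0 ⟨hu, hv0⟩
    rw [hv0, ENNReal.div_zero hu0] at h1
    simp at h1
    exact absurd (h1 ▸ hε) (by simp)
  rcases eq_or_ne v ∞ with hvt | hvt
  · exfalso
    rw [hvt, ENNReal.div_top] at h2
    simp at h2
    exact absurd (lt_of_le_of_lt h2 hε) (lt_irrefl _)
  constructor
  · have : u / v ≤ 1 + ε := by
      rw [tsub_le_iff_right] at h1; rwa [add_comm] at h1
    exact (ENNReal.div_le_iff_le_mul (Or.inl hv0) (Or.inl hvt)).1 this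
  · have h3 : 1 - ε ≤ u / v := by
      rw [tsub_le_iff_right] at h2
      exact tsub_le_iff_left.2 h2
    have h4 : (1 - ε) * v ≤ u :=
      (ENNReal.le_div_iff_mul_le (Or.inl hv0) (Or.inl hvt)).1 h3
    have hne : (1 - ε) ≠ 0 := by
      simp only [ne_eq, tsub_eq_zero_iff_le, not_le]; exact hε
    calc v = (1 - ε)⁻¹ * ((1 - ε) * v) := by
            rw [← mul_assoc, ENNReal.inv_mul_cancel hne (by simp), one_mul]
      _ ≤ (1 - ε)⁻¹ * u := by gcongr

lemma otCost_le_mul {Z : Type*} [MeasurableSpace Z]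
    {c₁ c₂ : Z → Z → ℝ≥0∞} {k : ℝ≥0∞} (hk0 : k ≠ 0) (hkt : k ≠ ∞)
    (h : ∀ x y, c₁ x y ≤ k * c₂ x y) (μ ν : Measure Z) :
    otCost c₁ μ ν ≤ k * otCost c₂ μ ν := by
  unfold otCost
  rw [ENNReal.mul_iInf_of_ne hk0 hkt]
  refine le_iInf fun π => ?_
  rw [ENNReal.mul_iInf_of_ne hk0 hkt]
  refine le_iInf fun hπ => ?_
  refine le_trans (iInf₂_le π hπ) ?_
  calc ∫⁻ p, c₁ p.1 p.2 ∂π ≤ ∫⁻ p, k * c₂ p.1 p.2 ∂π :=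
        lintegral_mono fun p => h p.1 p.2
    _ = k * ∫⁻ p, c₂ p.1 p.2 ∂π := lintegral_const_mul' _ _ hkt

/-- If the costs `c_n` converge to `c` in the sense that
`‖c / c_n − 1‖_∞ → 0` (with the convention `0/0 = 1`), `τ_c(γ) < ∞` and
`τ_c(γ_n) → τ_c(γ)`, then also `τ_{c_n}(γ_n) → τ_c(γ)`. -/
theorem tdep_tendsto_of_varying_costs
    {X Y : Type*} [TopologicalSpace X] [PolishSpace X] [MeasurableSpace X] [BorelSpace X]
    [TopologicalSpace Y] [PolishSpace Y] [MeasurableSpace Y] [BorelSpace Y]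
    (c : X × Y → X × Y → ℝ≥0∞)
    (hc_lsc : LowerSemicontinuous (Function.uncurry c))
    (hc_symm : ∀ z₁ z₂, c z₁ z₂ = c z₂ z₁)
    (hc_diag : ∀ z, c z z = 0)
    (cn : ℕ → (X × Y) → (X × Y) → ℝ≥0∞)
    (hcn_lsc : ∀ n, LowerSemicontinuous (Function.uncurry (cn n)))
    (hcn_symm : ∀ n z₁ z₂, cn n z₁ z₂ = cn n z₂ z₁)
    (hcn_diag : ∀ n z, cn n z z = 0)
    (hunif : Tendsto
      (fun n => ⨆ q : (X × Y) × (X × Y), ratioDev (c q.1 q.2) (cn n q.1 q.2))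
      atTop (𝓝 0))
    (γ : Measure (X × Y)) [IsProbabilityMeasure γ]
    (γn : ℕ → Measure (X × Y)) (hγn : ∀ n, IsProbabilityMeasure (γn n))
    (hfin : tdep c γ ≠ ∞)
    (hconv : Tendsto (fun n => tdep c (γn n)) atTop (𝓝 (tdep c γ))) :
    Tendsto (fun n => tdep (cn n) (γn n)) atTop (𝓝 (tdep c γ)) := by
  set ε : ℕ → ℝ≥0∞ := fun n => ⨆ q : (X × Y) × (X × Y), ratioDev (c q.1 q.2) (cn n q.1 q.2)
    with hε
  have hev : ∀ᶠ n in atTop, ε n < 1 := hunif.eventually (gt_mem_nhds zero_lt_one)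
  -- lower and upper bounds
  have hlow : ∀ᶠ n in atTop,
      (1 + ε n)⁻¹ * tdep c (γn n) ≤ tdep (cn n) (γn n) := by
    filter_upwards [hev] with n hn
    have hb : ∀ x y, c x y ≤ (1 + ε n) * cn n x y := fun x y =>
      (ratioDev_bounds hn (le_iSup (fun q : (X × Y) × (X × Y) =>
        ratioDev (c q.1 q.2) (cn n q.1 q.2)) (x, y))).1
    have ht : (1 + ε n) ≠ ∞ := by
      intro h
      have : ε n = ∞ := by
        by_contra h'
        exact (ENNReal.add_ne_top.2 ⟨one_ne_top, h'⟩) h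
      exact absurd (this ▸ hn) (by simp)
    have h0 : (1 + ε n) ≠ 0 := by simp
    have := otCost_le_mul h0 ht hb (γn n)
      (((γn n).map Prod.fst).prod ((γn n).map Prod.snd))
    calc (1 + ε n)⁻¹ * tdep c (γn n)
        ≤ (1 + ε n)⁻¹ * ((1 + ε n) * tdep (cn n) (γn n)) := by gcongr; exact this
      _ = tdep (cn n) (γn n) := by
          rw [← mul_assoc, ENNReal.inv_mul_cancel h0 ht, one_mul]
  have hup : ∀ᶠ n in atTop,
      tdep (cn n) (γn n) ≤ (1 - ε n)⁻¹ * tdep c (γn n) := by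
    filter_upwards [hev] with n hn
    have hb : ∀ x y, cn n x y ≤ (1 - ε n)⁻¹ * c x y := fun x y =>
      (ratioDev_bounds hn (le_iSup (fun q : (X × Y) × (X × Y) =>
        ratioDev (c q.1 q.2) (cn n q.1 q.2)) (x, y))).2
    have hne : (1 - ε n) ≠ 0 := by
      simp only [ne_eq, tsub_eq_zero_iff_le, not_le]; exact hn
    exact otCost_le_mul (by simp [hne]) (by simp [hne]) hb (γn n)
      (((γn n).map Prod.fst).prod ((γn n).map Prod.snd))
  -- limits of the bounding sequences
  have h1 : Tendsto (fun n => (1 + ε n)⁻¹ * tdep c (γn n)) atTop (𝓝 (tdep c γ)) := by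
    have ha : Tendsto (fun n => (1 + ε n)⁻¹) atTop (𝓝 1) := by
      have h' : Tendsto (fun n => 1 + ε n) atTop (𝓝 1) := by
        simpa using tendsto_const_nhds.add hunif
      convert h'.inv using 2
      simp
    have := ENNReal.Tendsto.mul ha (Or.inl one_ne_zero) hconv (Or.inr one_ne_top)
    simpa using this
  have h2 : Tendsto (fun n => (1 - ε n)⁻¹ * tdep c (γn n)) atTop (𝓝 (tdep c γ)) := by
    have ha : Tendsto (fun n => (1 - ε n)⁻¹) atTop (𝓝 1) := by
      have h' : Tendsto (fun n => 1 - ε n) atTop (𝓝 1) := by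
        simpa using ENNReal.Tendsto.sub tendsto_const_nhds hunif (Or.inl one_ne_top)
      convert h'.inv using 2
      simp
    have := ENNReal.Tendsto.mul ha (Or.inl one_ne_zero) hconv (Or.inr one_ne_top)
    simpa using this
  exact tendsto_of_tendsto_of_tendsto_of_le_of_le' h1 h2 hlow hup
end

section
/- Let X and Y be Polish spaces and let γ be a probability measure on X × Y with marginals μ on X and ν on Y. Suppose the cost function c on X × Y satisfies c_X(x₁,x₂) ≥ sup_{y ∈ Y} c(x₁,y,x₂,y) and c_Y(y₁,y₂) ≥ sup_{x ∈ X} c(x,y₁,x,y₂) for symmetric marginal costs c_X, c_Y. Define c_XY on (X × Y) × (X × Y) by c_XY(x₁,y₁,x₂,y₂) = min(c_X(x₁,x₂), c_Y(y₁,y₂)). Then τ_c(γ) ≤ diam_{c_XY} γ ≤ min(diam_{c_X} μ, diam_{c_Y} ν). -/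
open MeasureTheory ENNReal Filter Topology
open scoped ProbabilityTheory

/-- The `c`-diameter of a measure `μ`: `diam_c μ = ∫∫ c dμ dμ`. -/
noncomputable def diamC {Z : Type*} [MeasurableSpace Z]
    (c : Z → Z → ℝ≥0∞) (μ : Measure Z) : ℝ≥0∞ :=
  ∫⁻ z₁, ∫⁻ z₂, c z₁ z₂ ∂μ ∂μ

/-- For any (possibly non-measurable) `F`, the integral of `F ∘ fst` against `γ` is at most
the integral of `F` against the first marginal. Uses disintegration. -/
lemma lintegral_fst_comp_le {X Y : Type*} [MeasurableSpace X] [MeasurableSpace Y]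
    [StandardBorelSpace Y] [Nonempty Y]
    (γ : Measure (X × Y)) [IsProbabilityMeasure γ] (F : X → ℝ≥0∞) :
    ∫⁻ z, F z.1 ∂γ ≤ ∫⁻ x, F x ∂(γ.map Prod.fst) := by
  have h : γ.fst ⊗ₘ γ.condKernel = γ := γ.disintegrate γ.condKernel
  calc ∫⁻ z, F z.1 ∂γ = ∫⁻ z, F z.1 ∂(γ.fst ⊗ₘ γ.condKernel) := by rw [h]
    _ ≤ ∫⁻ x, F x ∂γ.fst := ?_
    _ = ∫⁻ x, F x ∂(γ.map Prod.fst) := rfl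
  conv_lhs => rw [lintegral_def]
  refine iSup₂_le fun s hs => ?_
  calc s.lintegral (γ.fst ⊗ₘ γ.condKernel)
      = ∫⁻ z, s z ∂(γ.fst ⊗ₘ γ.condKernel) := (s.lintegral_eq_lintegral _).symm
    _ = ∫⁻ x, ∫⁻ y, s (x, y) ∂(γ.condKernel x) ∂γ.fst :=
        Measure.lintegral_compProd s.measurable
    _ ≤ ∫⁻ x, ∫⁻ y, F x ∂(γ.condKernel x) ∂γ.fst :=
        lintegral_mono fun x => lintegral_mono fun y => hs (x, y)
    _ = ∫⁻ x, F x ∂γ.fst := by simp [lintegral_const]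

/-- Same as `lintegral_fst_comp_le` for the second marginal. -/
lemma lintegral_snd_comp_le {X Y : Type*} [MeasurableSpace X] [MeasurableSpace Y]
    [StandardBorelSpace X] [Nonempty X]
    (γ : Measure (X × Y)) [IsProbabilityMeasure γ] (F : Y → ℝ≥0∞) :
    ∫⁻ z, F z.2 ∂γ ≤ ∫⁻ y, F y ∂(γ.map Prod.snd) := by
  have e : (X × Y) ≃ᵐ (Y × X) := MeasurableEquiv.prodComm
  haveI : IsProbabilityMeasure (γ.map (MeasurableEquiv.prodComm : (X × Y) ≃ᵐ Y × X)) :=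
    Measure.isProbabilityMeasure_map (MeasurableEquiv.prodComm.measurable.aemeasurable)
  have h1 : ∫⁻ z, F z.2 ∂γ
      = ∫⁻ w, F w.1 ∂(γ.map (MeasurableEquiv.prodComm : (X × Y) ≃ᵐ Y × X)) :=
    (lintegral_map_equiv (fun w => F w.1) MeasurableEquiv.prodComm).symm
  rw [h1]
  refine (lintegral_fst_comp_le _ F).trans_eq ?_
  rw [Measure.map_map measurable_fst MeasurableEquiv.prodComm.measurable]
  rfl

/-- The transport-dependency half: `τ_c(γ) ≤ diam_{c_XY} γ`. -/
lemma tdep_le_diamC_min {X Y : Type*} [MeasurableSpace X] [MeasurableSpace Y]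
    (c : X × Y → X × Y → ℝ≥0∞)
    (hc_meas : Measurable fun p : (X × Y) × (X × Y) => c p.1 p.2)
    (cX : X → X → ℝ≥0∞) (cY : Y → Y → ℝ≥0∞)
    (hcX_symm : ∀ x₁ x₂, cX x₁ x₂ = cX x₂ x₁)
    (hcY_symm : ∀ y₁ y₂, cY y₁ y₂ = cY y₂ y₁)
    (hcX_bound : ∀ x₁ x₂ y, c (x₁, y) (x₂, y) ≤ cX x₁ x₂)
    (hcY_bound : ∀ y₁ y₂ x, c (x, y₁) (x, y₂) ≤ cY y₁ y₂)
    (γ : Measure (X × Y)) [IsProbabilityMeasure γ] :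
    tdep c γ ≤ diamC (fun z₁ z₂ => min (cX z₁.1 z₂.1) (cY z₁.2 z₂.2)) γ := by
  classical
  set A : Set ((X × Y) × (X × Y)) := {q | max (c q.1 (q.1.1, q.2.2)) (c q.2 (q.2.1, q.1.2))
      ≤ max (c q.1 (q.2.1, q.1.2)) (c q.2 (q.1.1, q.2.2))} with hA_def
  have ht : Measurable fun q : (X × Y) × (X × Y) => ((q.1.1, q.2.2) : X × Y) :=
    measurable_fst.fst.prodMk measurable_snd.snd
  have ht' : Measurable fun q : (X × Y) × (X × Y) => ((q.2.1, q.1.2) : X × Y) :=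
    measurable_snd.fst.prodMk measurable_fst.snd
  have hA : MeasurableSet A := measurableSet_le
    ((hc_meas.comp (measurable_fst.prodMk ht)).max (hc_meas.comp (measurable_snd.prodMk ht')))
    ((hc_meas.comp (measurable_fst.prodMk ht')).max (hc_meas.comp (measurable_snd.prodMk ht)))
  set Z : (X × Y) × (X × Y) → X × Y := fun q => if q ∈ A then q.1 else q.2 with hZ_def
  have hZ : Measurable Z := Measurable.ite hA measurable_fst measurable_snd
  set Φ : (X × Y) × (X × Y) → (X × Y) × (X × Y) := fun q => (Z q, (q.1.1, q.2.2)) with hΦ_def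
  have hΦ : Measurable Φ := hZ.prodMk ht
  set π : Measure ((X × Y) × (X × Y)) := (γ.prod γ).map Φ with hπ_def
  have hswap : ∀ q : (X × Y) × (X × Y), Prod.swap q ∈ A ↔ q ∈ A := by
    intro q
    simp only [hA_def, Set.mem_setOf_eq, Prod.fst_swap, Prod.snd_swap]
    rw [max_comm (c q.2 (q.2.1, q.1.2)) (c q.1 (q.1.1, q.2.2)),
        max_comm (c q.2 (q.1.1, q.2.2)) (c q.1 (q.2.1, q.1.2))]
  have hmf : π.map Prod.fst = γ := by
    rw [hπ_def, Measure.map_map measurable_fst hΦ]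
    have hZeq : Prod.fst ∘ Φ = Z := rfl
    rw [hZeq]
    ext B hB
    rw [Measure.map_apply hZ hB]
    have hpre : Z ⁻¹' B = ((Prod.fst ⁻¹' B) ∩ A) ∪ ((Prod.snd ⁻¹' B) ∩ Aᶜ) := by
      ext q
      by_cases hq : q ∈ A <;> simp [hZ_def, hq]
    rw [hpre, measure_union ?_ ((measurable_snd hB).inter hA.compl)]
    · have h2 : (γ.prod γ) ((Prod.snd ⁻¹' B) ∩ Aᶜ) = (γ.prod γ) ((Prod.fst ⁻¹' B) ∩ Aᶜ) := by
        conv_lhs => rw [← Measure.prod_swap]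
        rw [Measure.map_apply measurable_swap ((measurable_snd hB).inter hA.compl)]
        congr 1
        ext q
        simp [Set.mem_preimage, hswap q]
      rw [h2]
      have h3 : (Prod.fst ⁻¹' B) ∩ Aᶜ = (Prod.fst ⁻¹' B) \ A := rfl
      rw [h3, measure_inter_add_diff _ hA]
      have h4 : (γ.prod γ) (Prod.fst ⁻¹' B) = ((γ.prod γ).map Prod.fst) B :=
        (Measure.map_apply measurable_fst hB).symm
      rw [h4]
      have h5 : (γ.prod γ).map Prod.fst = γ := Measure.fst_prod
      rw [h5]
    · exact Set.disjoint_right.2 fun q hq hq' => hq.2 hq'.2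
  have hms : π.map Prod.snd = (γ.map Prod.fst).prod (γ.map Prod.snd) := by
    rw [hπ_def, Measure.map_map measurable_snd hΦ]
    have h1 : Prod.snd ∘ Φ = Prod.map (Prod.fst : X × Y → X) (Prod.snd : X × Y → Y) := rfl
    rw [h1, Measure.map_prod_map _ _ measurable_fst measurable_snd]
  have hptwise : ∀ q : (X × Y) × (X × Y),
      c (Φ q).1 (Φ q).2 ≤ min (cX q.1.1 q.2.1) (cY q.1.2 q.2.2) := by
    intro q
    have hY1 : c q.1 (q.1.1, q.2.2) ≤ cY q.1.2 q.2.2 := hcY_bound q.1.2 q.2.2 q.1.1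
    have hY2 : c q.2 (q.2.1, q.1.2) ≤ cY q.1.2 q.2.2 :=
      (hcY_bound q.2.2 q.1.2 q.2.1).trans (le_of_eq (hcY_symm _ _))
    have hX1 : c q.1 (q.2.1, q.1.2) ≤ cX q.1.1 q.2.1 := hcX_bound q.1.1 q.2.1 q.1.2
    have hX2 : c q.2 (q.1.1, q.2.2) ≤ cX q.1.1 q.2.1 :=
      (hcX_bound q.2.1 q.1.1 q.2.2).trans (le_of_eq (hcX_symm _ _))
    by_cases hq : q ∈ A
    · have hΦq : Φ q = (q.1, (q.1.1, q.2.2)) := by simp [hΦ_def, hZ_def, hq]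
      rw [hΦq]
      refine le_min ?_ hY1
      calc c q.1 (q.1.1, q.2.2)
          ≤ max (c q.1 (q.1.1, q.2.2)) (c q.2 (q.2.1, q.1.2)) := le_max_left _ _
        _ ≤ max (c q.1 (q.2.1, q.1.2)) (c q.2 (q.1.1, q.2.2)) := hq
        _ ≤ cX q.1.1 q.2.1 := max_le hX1 hX2
    · have hΦq : Φ q = (q.2, (q.1.1, q.2.2)) := by simp [hΦ_def, hZ_def, hq]
      rw [hΦq]
      refine le_min hX2 ?_
      calc c q.2 (q.1.1, q.2.2)
          ≤ max (c q.1 (q.2.1, q.1.2)) (c q.2 (q.1.1, q.2.2)) := le_max_right _ _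
        _ ≤ max (c q.1 (q.1.1, q.2.2)) (c q.2 (q.2.1, q.1.2)) := le_of_lt (not_le.1 hq)
        _ ≤ cY q.1.2 q.2.2 := max_le hY1 hY2
  have hcost : ∫⁻ p, c p.1 p.2 ∂π
      ≤ diamC (fun z₁ z₂ => min (cX z₁.1 z₂.1) (cY z₁.2 z₂.2)) γ := by
    rw [hπ_def, lintegral_map hc_meas hΦ]
    calc ∫⁻ q, c (Φ q).1 (Φ q).2 ∂(γ.prod γ)
        = ∫⁻ z₁, ∫⁻ z₂, c (Φ (z₁, z₂)).1 (Φ (z₁, z₂)).2 ∂γ ∂γ :=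
          MeasureTheory.lintegral_prod _ (hc_meas.comp hΦ).aemeasurable
      _ ≤ ∫⁻ z₁, ∫⁻ z₂, min (cX z₁.1 z₂.1) (cY z₁.2 z₂.2) ∂γ ∂γ :=
          lintegral_mono fun z₁ => lintegral_mono fun z₂ => hptwise (z₁, z₂)
      _ = diamC (fun z₁ z₂ => min (cX z₁.1 z₂.1) (cY z₁.2 z₂.2)) γ := rfl
  refine le_trans ?_ hcost
  exact iInf₂_le π ⟨hmf, hms⟩

/-- With marginal cost bounds `c_X`, `c_Y` and the combined cost
`c_XY = min(c_X, c_Y)` on `X × Y`, the transport dependency satisfies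
`τ_c(γ) ≤ diam_{c_XY} γ ≤ min(diam_{c_X} μ, diam_{c_Y} ν)`. -/
theorem tdep_le_diam_min
    {X Y : Type*} [TopologicalSpace X] [PolishSpace X] [MeasurableSpace X] [BorelSpace X]
    [TopologicalSpace Y] [PolishSpace Y] [MeasurableSpace Y] [BorelSpace Y]
    (c : X × Y → X × Y → ℝ≥0∞)
    (hc_lsc : LowerSemicontinuous (Function.uncurry c))
    (hc_symm : ∀ z₁ z₂, c z₁ z₂ = c z₂ z₁)
    (hc_diag : ∀ z, c z z = 0)
    (cX : X → X → ℝ≥0∞) (cY : Y → Y → ℝ≥0∞)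
    (hcX_symm : ∀ x₁ x₂, cX x₁ x₂ = cX x₂ x₁)
    (hcY_symm : ∀ y₁ y₂, cY y₁ y₂ = cY y₂ y₁)
    (hcX_bound : ∀ x₁ x₂ y, c (x₁, y) (x₂, y) ≤ cX x₁ x₂)
    (hcY_bound : ∀ y₁ y₂ x, c (x, y₁) (x, y₂) ≤ cY y₁ y₂)
    (γ : Measure (X × Y)) [IsProbabilityMeasure γ] :
    tdep c γ ≤ diamC (fun z₁ z₂ => min (cX z₁.1 z₂.1) (cY z₁.2 z₂.2)) γ ∧
      diamC (fun z₁ z₂ : X × Y => min (cX z₁.1 z₂.1) (cY z₁.2 z₂.2)) γ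
        ≤ min (diamC cX (γ.map Prod.fst)) (diamC cY (γ.map Prod.snd)) := by
  haveI : Nonempty (X × Y) := Measure.nonempty_of_neZero γ
  haveI : Nonempty X := Nonempty.map Prod.fst ‹Nonempty (X × Y)›
  haveI : Nonempty Y := Nonempty.map Prod.snd ‹Nonempty (X × Y)›
  have hc_meas : Measurable fun p : (X × Y) × (X × Y) => c p.1 p.2 := hc_lsc.measurable
  constructor
  · exact tdep_le_diamC_min c hc_meas cX cY hcX_symm hcY_symm hcX_bound hcY_bound γ
  · refine le_min ?_ ?_
    · calc ∫⁻ z₁, ∫⁻ z₂, min (cX z₁.1 z₂.1) (cY z₁.2 z₂.2) ∂γ ∂γ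
          ≤ ∫⁻ z₁, ∫⁻ x₂, cX z₁.1 x₂ ∂(γ.map Prod.fst) ∂γ :=
            lintegral_mono fun z₁ =>
              (lintegral_mono fun z₂ => min_le_left _ _).trans
                (lintegral_fst_comp_le γ (cX z₁.1))
        _ ≤ ∫⁻ x₁, ∫⁻ x₂, cX x₁ x₂ ∂(γ.map Prod.fst) ∂(γ.map Prod.fst) :=
            lintegral_fst_comp_le γ (fun x₁ => ∫⁻ x₂, cX x₁ x₂ ∂(γ.map Prod.fst))
    · calc ∫⁻ z₁, ∫⁻ z₂, min (cX z₁.1 z₂.1) (cY z₁.2 z₂.2) ∂γ ∂γ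
          ≤ ∫⁻ z₁, ∫⁻ y₂, cY z₁.2 y₂ ∂(γ.map Prod.snd) ∂γ :=
            lintegral_mono fun z₁ =>
              (lintegral_mono fun z₂ => min_le_right _ _).trans
                (lintegral_snd_comp_le γ (cY z₁.2))
        _ ≤ ∫⁻ y₁, ∫⁻ y₂, cY y₁ y₂ ∂(γ.map Prod.snd) ∂(γ.map Prod.snd) :=
            lintegral_snd_comp_le γ (fun y₁ => ∫⁻ y₂, cY y₁ y₂ ∂(γ.map Prod.snd))
end

section
/- Let X and Y be Polish spaces, k_X a cost function on X, d_Y a lower semicontinuous pseudo-metric on Y, and let the cost on X × Y be c(x₁,y₁,x₂,y₂) = h(k_X(x₁,x₂) + d_Y(y₁,y₂)), where h : [0,∞) → [0,∞) is strictly increasing with h(0) = 0. Set c_Y = h ∘ d_Y, and let γ be a probability measure on X × Y with second marginal ν. If γ is contracting (i.e., d_Y(y₁,y₂) ≤ k_X(x₁,x₂) for all (x₁,y₁), (x₂,y₂) in the support of γ), then τ_c(γ) = diam_{c_Y} ν. Conversely, if diam_{c_Y} ν < ∞ and τ_c(γ) = diam_{c_Y} ν, then γ is almost surely contracting, i.e.,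 d_Y(y₁,y₂) ≤ k_X(x₁,x₂) holds (γ ⊗ γ)-almost everywhere. -/
open MeasureTheory ENNReal Filter Topology

/-- The (topological) support of a measure: the set of points all of whose open
neighborhoods have positive measure (the smallest closed set of full measure). -/
def msupport {Z : Type*} [TopologicalSpace Z] [MeasurableSpace Z]
    (μ : Measure Z) : Set Z :=
  {z | ∀ U : Set Z, IsOpen U → z ∈ U → 0 < μ U}


/-!
Redrawing `Y` independently while keeping `X` couples `γ` with `γ_X ⊗ ν`, at cost
`∫∫ h (dY y y') = diam_{c_Y} ν` since `kX x x = 0`. Conversely, glue any coupling of `(x, y) ∼ γ`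
with `(x', y') ∼ γ_X ⊗ ν` to a draw `ỹ` from the conditional law of `Y` given `X = x'`: then
`(ỹ, y') ∼ ν ⊗ ν`, and since `(x, y)` and `(x', ỹ)` lie in the support, contraction and the
triangle inequality give `dY ỹ y' ≤ kX x x' + dY y y'`, so every coupling costs at least the
diameter. For the converse, exchanging the `X`-coordinates of two independent draws of `γ`
wherever `kX < dY` yields a coupling of cost `∫ h (min kX dY) ≤ ∫ h dY = diam_{c_Y} ν`;
if the diameter is finite and optimal, `h (min kX dY) = h dY` almost everywhere, and strict
monotonicity of `h` gives `dY ≤ kX`.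
-/

open ProbabilityTheory

lemma ae_mem_msupport {Z : Type*} [TopologicalSpace Z] [HereditarilyLindelofSpace Z]
    [MeasurableSpace Z] (μ : Measure Z) : ∀ᵐ z ∂μ, z ∈ msupport μ :=
  mem_of_superset μ.support_mem_ae fun z hz U hU hzU ↦
    (μ.mem_support_iff_forall z).1 hz U (hU.mem_nhds hzU)

lemma map_piecewise_comp_swap {α β : Type*} [MeasurableSpace α] [MeasurableSpace β]
    {Γ : Measure (α × α)} (hΓ : Γ.map Prod.swap = Γ) {B : Set (α × α)} [DecidablePred (· ∈ B)]
    (hB : MeasurableSet B) (hB_swap : Prod.swap ⁻¹' B = B) {g : α × α → β} (hg : Measurable g) :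
    Γ.map (B.piecewise (g ∘ Prod.swap) g) = Γ.map g := by
  ext s hs
  have hgs : MeasurableSet (g ⁻¹' s) := hg hs
  have hswap : Γ ((g ∘ Prod.swap) ⁻¹' s ∩ B) = Γ (g ⁻¹' s ∩ B) := by
    conv_rhs => rw [← hΓ, Measure.map_apply measurable_swap (hgs.inter hB)]
    rw [Set.preimage_inter, hB_swap, Set.preimage_comp]
  rw [Measure.map_apply (Measurable.piecewise hB (hg.comp measurable_swap) hg) hs,
    Measure.map_apply hg hs, Set.piecewise_preimage, Set.ite,
    measure_union (Set.disjoint_sdiff_right.mono_left Set.inter_subset_right) (hgs.diff hB), hswap,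
    measure_inter_add_sdiff _ hB]

section Coupling

variable {X Y : Type*} [MeasurableSpace X] [MeasurableSpace Y]

lemma tdep_le_lintegral_piecewise (c : X × Y → X × Y → ℝ≥0∞) (γ : Measure (X × Y))
    [IsProbabilityMeasure γ] {B : Set ((X × Y) × (X × Y))} [DecidablePred (· ∈ B)]
    (hB : MeasurableSet B) (hB_swap : Prod.swap ⁻¹' B = B) :
    tdep c γ ≤ ∫⁻ p, c p.1 (B.piecewise (fun p ↦ (p.2.1, p.1.2)) (fun p ↦ (p.1.1, p.2.2)) p)
      ∂(γ.prod γ) := by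
  set g : (X × Y) × (X × Y) → X × Y := fun p ↦ (p.1.1, p.2.2)
  have hg : Measurable g := measurable_fst.fst.prodMk measurable_snd.snd
  have hpw : Measurable (B.piecewise (g ∘ Prod.swap) g) :=
    Measurable.piecewise hB (hg.comp measurable_swap) hg
  have hF : Measurable fun p ↦ (p.1, B.piecewise (g ∘ Prod.swap) g p) :=
    measurable_fst.prodMk hpw
  refine (iInf₂_le ((γ.prod γ).map fun p ↦ (p.1, B.piecewise (g ∘ Prod.swap) g p))
    ⟨?_, ?_⟩).trans (lintegral_map_le _ _)
  · rw [Measure.map_map measurable_fst hF]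
    exact Measure.fst_prod
  · rw [Measure.map_map measurable_snd hF]
    change (γ.prod γ).map (B.piecewise (g ∘ Prod.swap) g) = _
    rw [map_piecewise_comp_swap Measure.prod_swap hB hB_swap hg,
      Measure.map_prod_map _ _ measurable_fst measurable_snd]
    rfl

lemma lintegral_prod_comp_eq_diamC {Z : Type*} [MeasurableSpace Z] (μ : Measure Z) [SFinite μ]
    {φ : Z → Y} (hφ : Measurable φ) {f : Y → Y → ℝ≥0∞} (hf : Measurable (Function.uncurry f)) :
    ∫⁻ p, f (φ p.1) (φ p.2) ∂(μ.prod μ) = diamC f (μ.map φ) := by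
  calc ∫⁻ p, f (φ p.1) (φ p.2) ∂(μ.prod μ)
      = ∫⁻ q, Function.uncurry f q ∂((μ.map φ).prod (μ.map φ)) := by
        rw [Measure.map_prod_map _ _ hφ hφ, lintegral_map hf (hφ.prodMap hφ)]
        rfl
    _ = diamC f (μ.map φ) := lintegral_prod _ hf.aemeasurable

end Coupling

section Disintegration

variable {X Y : Type*} [MeasurableSpace X] [MeasurableSpace Y]

lemma measurable_lintegral_kernel_fst (κ : Kernel X Y) [IsSFiniteKernel κ] {f : Y → Y → ℝ≥0∞}
    (hf : Measurable (Function.uncurry f)) : Measurable fun p : X × Y ↦ ∫⁻ y, f y p.2 ∂κ p.1 :=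
  Measurable.lintegral_kernel_prod_right (κ := κ.prodMkRight Y)
    (hf.comp (measurable_snd.prodMk measurable_fst.snd))

variable [StandardBorelSpace Y] [Nonempty Y]

lemma lintegral_condKernel_eq_diamC (γ : Measure (X × Y)) [IsFiniteMeasure γ]
    {f : Y → Y → ℝ≥0∞} (hf : Measurable (Function.uncurry f)) :
    ∫⁻ p, ∫⁻ y, f y p.2 ∂γ.condKernel p.1 ∂((γ.map Prod.fst).prod (γ.map Prod.snd))
      = diamC f (γ.map Prod.snd) := by
  set κ := γ.condKernel
  set ν := γ.map Prod.snd
  have hH : Measurable fun y ↦ ∫⁻ y', f y y' ∂ν := hf.lintegral_prod_right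
  calc ∫⁻ p, ∫⁻ y, f y p.2 ∂κ p.1 ∂((γ.map Prod.fst).prod ν)
      = ∫⁻ x, ∫⁻ y', ∫⁻ y, f y y' ∂κ x ∂ν ∂(γ.map Prod.fst) :=
        lintegral_prod _ (measurable_lintegral_kernel_fst κ hf).aemeasurable
    _ = ∫⁻ x, ∫⁻ y, ∫⁻ y', f y y' ∂ν ∂κ x ∂(γ.map Prod.fst) :=
        lintegral_congr fun x ↦ lintegral_lintegral_swap (hf.comp measurable_swap).aemeasurable
    _ = ∫⁻ z, ∫⁻ y', f z.2 y' ∂ν ∂γ := by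
        conv_rhs => rw [← γ.disintegrate κ,
          Measure.lintegral_compProd (f := fun z ↦ ∫⁻ y', f z.2 y' ∂ν) (hH.comp measurable_snd)]
        rfl
    _ = diamC f ν := (lintegral_map hH measurable_snd).symm

lemma diamC_le_tdep (c : X × Y → X × Y → ℝ≥0∞) {cY : Y → Y → ℝ≥0∞}
    (hcY : Measurable (Function.uncurry cY)) (γ : Measure (X × Y)) [IsProbabilityMeasure γ]
    {S : Set (X × Y)} (hS : ∀ᵐ z ∂γ, z ∈ S)
    (hcontr : ∀ z ∈ S, ∀ z' ∈ S, ∀ y, cY z'.2 y ≤ c z (z'.1, y)) :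
    diamC cY (γ.map Prod.snd) ≤ tdep c γ := by
  refine le_iInf₂ fun π ⟨hπ₁, hπ₂⟩ ↦ ?_
  set κ := γ.condKernel
  have hS₁ : ∀ᵐ p ∂π, p.1 ∈ S := ae_of_ae_map measurable_fst.aemeasurable (hπ₁ ▸ hS)
  have hS₂ : ∀ᵐ p ∂π, ∀ᵐ y ∂κ p.2.1, (p.2.1, y) ∈ S := by
    have hx : ∀ᵐ x ∂(γ.map Prod.fst), ∀ᵐ y ∂κ x, (x, y) ∈ S :=
      Measure.ae_ae_of_ae_compProd (κ := κ) (by rwa [← Measure.fst, γ.disintegrate κ])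
    have : IsProbabilityMeasure (γ.map Prod.snd) :=
      Measure.isProbabilityMeasure_map measurable_snd.aemeasurable
    rw [← Measure.fst_prod (μ := γ.map Prod.fst) (ν := γ.map Prod.snd), Measure.fst, ← hπ₂,
      Measure.map_map measurable_fst measurable_snd] at hx
    exact ae_of_ae_map (measurable_fst.comp measurable_snd).aemeasurable hx
  calc diamC cY (γ.map Prod.snd)
      = ∫⁻ p, ∫⁻ y, cY y p.2.2 ∂κ p.2.1 ∂π := by
        rw [← lintegral_condKernel_eq_diamC γ hcY, ← hπ₂,
          lintegral_map (measurable_lintegral_kernel_fst κ hcY) measurable_snd]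
    _ ≤ ∫⁻ p, ∫⁻ _, c p.1 p.2 ∂κ p.2.1 ∂π := by
        refine lintegral_mono_ae ?_
        filter_upwards [hS₁, hS₂] with p hp₁ hp₂
        exact lintegral_mono_ae (hp₂.mono fun y hy ↦ hcontr _ hp₁ _ hy _)
    _ = ∫⁻ p, c p.1 p.2 ∂π := by simp

end Disintegration

section AdditiveCost

variable {X Y : Type*}

def additiveCost (h : ℝ≥0∞ → ℝ≥0∞) (kX : X → X → ℝ≥0∞) (dY : Y → Y → ℝ≥0∞) :
    X × Y → X × Y → ℝ≥0∞ :=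
  fun z₁ z₂ ↦ h (kX z₁.1 z₂.1 + dY z₁.2 z₂.2)

variable {h : ℝ≥0∞ → ℝ≥0∞} {kX : X → X → ℝ≥0∞} {dY : Y → Y → ℝ≥0∞}

lemma le_additiveCost_of_contracting (hkX_symm : ∀ x₁ x₂, kX x₁ x₂ = kX x₂ x₁)
    (hdY_triangle : ∀ y₁ y₂ y₃, dY y₁ y₃ ≤ dY y₁ y₂ + dY y₂ y₃) (hh : Monotone h)
    {z z' : X × Y} (hzz' : dY z'.2 z.2 ≤ kX z'.1 z.1) (y : Y) :
    h (dY z'.2 y) ≤ additiveCost h kX dY z (z'.1, y) :=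
  calc h (dY z'.2 y)
      ≤ h (dY z'.2 z.2 + dY z.2 y) := hh (hdY_triangle _ _ _)
    _ ≤ h (kX z'.1 z.1 + dY z.2 y) := hh (add_le_add hzz' le_rfl)
    _ = additiveCost h kX dY z (z'.1, y) := by rw [additiveCost, hkX_symm]

variable [MeasurableSpace X] [MeasurableSpace Y]

lemma tdep_additiveCost_le_diamC (hkX_diag : ∀ x, kX x x = 0)
    (hcY : Measurable (Function.uncurry fun y₁ y₂ ↦ h (dY y₁ y₂))) (γ : Measure (X × Y))
    [IsProbabilityMeasure γ] :
    tdep (additiveCost h kX dY) γ ≤ diamC (fun y₁ y₂ ↦ h (dY y₁ y₂)) (γ.map Prod.snd) := by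
  have := tdep_le_lintegral_piecewise (additiveCost h kX dY) γ MeasurableSet.empty
    Set.preimage_empty
  simpa [additiveCost, hkX_diag, lintegral_prod_comp_eq_diamC γ measurable_snd hcY] using this

lemma ae_le_of_tdep_additiveCost_eq_diamC (hkX : Measurable (Function.uncurry kX))
    (hkX_symm : ∀ x₁ x₂, kX x₁ x₂ = kX x₂ x₁) (hkX_diag : ∀ x, kX x x = 0)
    (hdY : Measurable (Function.uncurry dY)) (hdY_symm : ∀ y₁ y₂, dY y₁ y₂ = dY y₂ y₁)
    (hdY_diag : ∀ y, dY y y = 0) (hh : StrictMono h) (γ : Measure (X × Y))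
    [IsProbabilityMeasure γ] (hfin : diamC (fun y₁ y₂ ↦ h (dY y₁ y₂)) (γ.map Prod.snd) ≠ ∞)
    (heq : tdep (additiveCost h kX dY) γ = diamC (fun y₁ y₂ ↦ h (dY y₁ y₂)) (γ.map Prod.snd)) :
    ∀ᵐ q ∂(γ.prod γ), dY q.1.2 q.2.2 ≤ kX q.1.1 q.2.1 := by
  have hk₂ : Measurable fun p : (X × Y) × (X × Y) ↦ kX p.1.1 p.2.1 :=
    hkX.comp (measurable_fst.fst.prodMk measurable_snd.fst)
  have hd₂ : Measurable fun p : (X × Y) × (X × Y) ↦ dY p.1.2 p.2.2 :=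
    hdY.comp (measurable_fst.snd.prodMk measurable_snd.snd)
  set B := {p : (X × Y) × (X × Y) | kX p.1.1 p.2.1 < dY p.1.2 p.2.2}
  have hB_swap : Prod.swap ⁻¹' B = B := by
    ext p
    simp [B, hkX_symm p.2.1, hdY_symm p.2.2]
  have hcost : ∀ p, additiveCost h kX dY p.1
      (B.piecewise (fun p ↦ (p.2.1, p.1.2)) (fun p ↦ (p.1.1, p.2.2)) p)
      = h (min (kX p.1.1 p.2.1) (dY p.1.2 p.2.2)) := by
    intro p
    by_cases hp : p ∈ B
    · simp [additiveCost, hp, hdY_diag, min_eq_left (show kX p.1.1 p.2.1 < _ from hp).le]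
    · simp [additiveCost, hp, hkX_diag,
        min_eq_right (not_lt.1 (show ¬kX p.1.1 p.2.1 < _ from hp))]
  have hdiam := lintegral_prod_comp_eq_diamC γ measurable_snd
    (f := fun y₁ y₂ ↦ h (dY y₁ y₂)) (hh.monotone.measurable.comp hdY)
  have hle : ∫⁻ p, h (dY p.1.2 p.2.2) ∂(γ.prod γ)
      ≤ ∫⁻ p, h (min (kX p.1.1 p.2.1) (dY p.1.2 p.2.2)) ∂(γ.prod γ) := by
    rw [hdiam, ← heq, ← lintegral_congr hcost]
    exact tdep_le_lintegral_piecewise _ γ (measurableSet_lt hk₂ hd₂) hB_swap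
  have hmin_le : ∀ p : (X × Y) × (X × Y),
      h (min (kX p.1.1 p.2.1) (dY p.1.2 p.2.2)) ≤ h (dY p.1.2 p.2.2) :=
    fun p ↦ hh.monotone (min_le_right _ _)
  have hae := ae_eq_of_ae_le_of_lintegral_le (ae_of_all _ hmin_le)
    (ne_top_of_le_ne_top (hdiam ▸ hfin) (lintegral_mono hmin_le))
    (hh.monotone.measurable.comp hd₂).aemeasurable hle
  filter_upwards [hae] with p hp
  exact min_eq_right_iff.1 (hh.injective hp)

end AdditiveCost

theorem tdep_eq_diam_of_contracting_general
    {X Y : Type*} [TopologicalSpace X] [PolishSpace X] [MeasurableSpace X] [BorelSpace X]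
    [TopologicalSpace Y] [PolishSpace Y] [MeasurableSpace Y] [BorelSpace Y]
    (kX : X → X → ℝ≥0∞)
    (hkX_lsc : LowerSemicontinuous (Function.uncurry kX))
    (hkX_symm : ∀ x₁ x₂, kX x₁ x₂ = kX x₂ x₁)
    (hkX_diag : ∀ x, kX x x = 0)
    (dY : Y → Y → ℝ≥0∞)
    (hdY_lsc : LowerSemicontinuous (Function.uncurry dY))
    (hdY_symm : ∀ y₁ y₂, dY y₁ y₂ = dY y₂ y₁)
    (hdY_diag : ∀ y, dY y y = 0)
    (hdY_triangle : ∀ y₁ y₂ y₃, dY y₁ y₃ ≤ dY y₁ y₂ + dY y₂ y₃)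
    (h : ℝ≥0∞ → ℝ≥0∞) (hh_mono : StrictMono h)
    (c : X × Y → X × Y → ℝ≥0∞)
    (hc : ∀ z₁ z₂ : X × Y, c z₁ z₂ = h (kX z₁.1 z₂.1 + dY z₁.2 z₂.2))
    (γ : Measure (X × Y)) [IsProbabilityMeasure γ] :
    ((∀ z₁ ∈ msupport γ, ∀ z₂ ∈ msupport γ, dY z₁.2 z₂.2 ≤ kX z₁.1 z₂.1) →
        tdep c γ = diamC (fun y₁ y₂ => h (dY y₁ y₂)) (γ.map Prod.snd)) ∧
      (diamC (fun y₁ y₂ => h (dY y₁ y₂)) (γ.map Prod.snd) ≠ ∞ →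
        tdep c γ = diamC (fun y₁ y₂ => h (dY y₁ y₂)) (γ.map Prod.snd) →
        ∀ᵐ q ∂(γ.prod γ), dY q.1.2 q.2.2 ≤ kX q.1.1 q.2.1) := by
  obtain rfl : c = additiveCost h kX dY := funext fun z₁ ↦ funext (hc z₁)
  have hcY : Measurable (Function.uncurry fun y₁ y₂ ↦ h (dY y₁ y₂)) :=
    hh_mono.monotone.measurable.comp hdY_lsc.measurable
  refine ⟨fun hcontr ↦ le_antisymm (tdep_additiveCost_le_diamC hkX_diag hcY γ) ?_,
    ae_le_of_tdep_additiveCost_eq_diamC hkX_lsc.measurable hkX_symm hkX_diag hdY_lsc.measurable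
      hdY_symm hdY_diag hh_mono γ⟩
  have : Nonempty Y := (nonempty_of_isProbabilityMeasure γ).map Prod.snd
  exact diamC_le_tdep _ hcY γ (ae_mem_msupport γ) fun z hz z' hz' ↦
    le_additiveCost_of_contracting hkX_symm hdY_triangle hh_mono.monotone (hcontr z' hz' z hz)

/-- For additive costs `c = h(k_X + d_Y)` with `h` strictly increasing
and vanishing at `0`: if `γ` is contracting on its support, then
`τ_c(γ) = diam_{c_Y} ν` with `c_Y = h ∘ d_Y`; conversely, if `diam_{c_Y} ν < ∞` and
`τ_c(γ) = diam_{c_Y} ν`, then `γ` is almost surely contracting. -/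
theorem tdep_eq_diam_of_contracting
    {X Y : Type*} [TopologicalSpace X] [PolishSpace X] [MeasurableSpace X] [BorelSpace X]
    [TopologicalSpace Y] [PolishSpace Y] [MeasurableSpace Y] [BorelSpace Y]
    (kX : X → X → ℝ≥0∞)
    (hkX_lsc : LowerSemicontinuous (Function.uncurry kX))
    (hkX_symm : ∀ x₁ x₂, kX x₁ x₂ = kX x₂ x₁)
    (hkX_diag : ∀ x, kX x x = 0)
    (dY : Y → Y → ℝ≥0∞)
    (hdY_lsc : LowerSemicontinuous (Function.uncurry dY))
    (hdY_symm : ∀ y₁ y₂, dY y₁ y₂ = dY y₂ y₁)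
    (hdY_diag : ∀ y, dY y y = 0)
    (hdY_triangle : ∀ y₁ y₂ y₃, dY y₁ y₃ ≤ dY y₁ y₂ + dY y₂ y₃)
    (h : ℝ≥0∞ → ℝ≥0∞) (hh_mono : StrictMono h) (hh_zero : h 0 = 0)
    (c : X × Y → X × Y → ℝ≥0∞)
    (hc : ∀ z₁ z₂ : X × Y, c z₁ z₂ = h (kX z₁.1 z₂.1 + dY z₁.2 z₂.2))
    (γ : Measure (X × Y)) [IsProbabilityMeasure γ] :
    ((∀ z₁ ∈ msupport γ, ∀ z₂ ∈ msupport γ, dY z₁.2 z₂.2 ≤ kX z₁.1 z₂.1) →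
        tdep c γ = diamC (fun y₁ y₂ => h (dY y₁ y₂)) (γ.map Prod.snd)) ∧
      (diamC (fun y₁ y₂ => h (dY y₁ y₂)) (γ.map Prod.snd) ≠ ∞ →
        tdep c γ = diamC (fun y₁ y₂ => h (dY y₁ y₂)) (γ.map Prod.snd) →
        ∀ᵐ q ∂(γ.prod γ), dY q.1.2 q.2.2 ≤ kX q.1.1 q.2.1) :=
  tdep_eq_diam_of_contracting_general kX hkX_lsc hkX_symm hkX_diag dY hdY_lsc hdY_symm hdY_diag
    hdY_triangle h hh_mono c hc γ
end

section
/- Let X and Y be Polish spaces and let c(x₁,y₁,x₂,y₂) = h(k_X(x₁,x₂) + d_Y(y₁,y₂)) be a cost function on X × Y, where h : [0,∞) → [0,∞) is continuous, strictly increasing with h(0) = 0, k_X is a continuous cost function on X, and d_Y is a continuous metric on Y. Set c_Y = h ∘ d_Y. Let γ be a probability measure on X × Y with marginals μ and ν and diam_{c_Y} ν < ∞. Then τ_c(γ) = diam_{c_Y} ν holds if and only if γ = (id, φ)_*μ for a measurable function φ : X → Y that is μ-almost surely contracting, i.e., there exists a Borel set A ⊆ X with μ(A) = 1 such that d_Y(φ(x₁),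 φ(x₂)) ≤ k_X(x₁,x₂) for all x₁, x₂ ∈ A. -/
open MeasureTheory ENNReal Filter Topology

/-!
If `γ = (id, φ)_*μ` with `φ` contracting, then for any coupling of `γ` and `μ ⊗ ν` the triangle
inequality and the contraction give `c((x₁, φ x₁), (x₂, y)) ≥ h (d_Y (φ x₂, y))`, whose integral is
`diam_{c_Y} ν`; and coupling `(x, y)` with `(x, y')` for independent `y'` costs exactly that.

Conversely, on `γ ⊗ γ` one may exchange, wherever `h (k_X (x₁, x₂)) < h (d_Y (y₁, y₂))`, the target
`(x₁, y₂)` for `(x₂, y₁)`; by symmetry this is still a coupling of `γ` with `μ ⊗ ν`, of cost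
`∫ min (h ∘ k_X, h ∘ d_Y) ≤ diam_{c_Y} ν`. Equality forces `d_Y (y₁, y₂) ≤ k_X (x₁, x₂)` almost
everywhere, hence on the support of `γ` (it is a closed condition). Since `k_X` vanishes on the
diagonal and `d_Y` separates points, `Prod.fst` is injective there, so by Lusin–Souslin the support
is the graph of a measurable map over a Borel set of full measure.
-/

namespace MeasureTheory

theorem Measure.map_piecewise_comp_eq_map {α β : Type*} [MeasurableSpace α] [MeasurableSpace β]
    {ρ : Measure α} {g : α → α} (hg : Measurable g) (hρ : ρ.map g = ρ) {M : Set α} (hM : MeasurableSet M) (hgM : g ⁻¹' M = M)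
    [DecidablePred (· ∈ M)] {f : α → β} (hf : Measurable f) :
    ρ.map (M.piecewise (f ∘ g) f) = ρ.map f := by
  have hrestrict : (ρ.restrict M).map g = ρ.restrict M := by
    conv_lhs => rw [← hgM]
    rw [← Measure.restrict_map hg hM, hρ]
  conv_lhs => rw [← ρ.restrict_add_restrict_compl hM]
  rw [Measure.map_add _ _ ((hf.comp hg).piecewise hM hf),
    Measure.map_congr (piecewise_ae_eq_restrict hM),
    Measure.map_congr (piecewise_ae_eq_restrict_compl hM), ← Measure.map_map hf hg, hrestrict,
    ← Measure.map_add _ _ hf, ρ.restrict_add_restrict_compl hM]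

theorem Measure.support_prod_support_subset {Z W : Type*} [TopologicalSpace Z] [MeasurableSpace Z]
    [TopologicalSpace W] [MeasurableSpace W] (μ : Measure Z) (ν : Measure W) [SFinite ν] :
    μ.support ×ˢ ν.support ⊆ (μ.prod ν).support := by
  rintro ⟨z, w⟩ ⟨hz, hw⟩
  rw [Measure.mem_support_iff_forall] at hz hw ⊢
  intro U hU
  obtain ⟨u, hu, v, hv, huv⟩ := mem_nhds_prod_iff.1 hU
  calc 0 < μ u * ν v := ENNReal.mul_pos (hz u hu).ne' (hw v hv).ne'
    _ = (μ.prod ν) (u ×ˢ v) := (Measure.prod_prod u v).symm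
    _ ≤ (μ.prod ν) U := measure_mono huv

section Graph

variable {X Y : Type*} [MeasurableSpace X] [MeasurableSpace Y]

theorem map_fst_map_graph_eq_self_iff [MeasurableEq Y] {γ : Measure (X × Y)} {φ : X → Y}
    (hφ : Measurable φ) :
    (γ.map Prod.fst).map (fun x => (x, φ x)) = γ ↔ ∀ᵐ p ∂γ, φ p.1 = p.2 := by
  have hgraph : Measurable fun x => (x, φ x) := measurable_id.prodMk hφ
  constructor
  · intro h
    rw [← h]
    exact (ae_map_iff hgraph.aemeasurable
      (measurableSet_eq_fun (hφ.comp measurable_fst) measurable_snd)).2 (ae_of_all _ fun _ => rfl)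
  · intro h
    rw [Measure.map_map hgraph measurable_fst]
    conv_rhs => rw [← Measure.map_id (μ := γ)]
    exact Measure.map_congr (h.mono fun p hp => Prod.ext rfl hp)

theorem exists_measurable_eq_snd_of_injOn_fst [StandardBorelSpace X] [StandardBorelSpace Y]
    [Nonempty Y] {S : Set (X × Y)} (hS : MeasurableSet S) (hinj : S.InjOn Prod.fst) :
    ∃ φ : X → Y, Measurable φ ∧ ∀ p ∈ S, φ p.1 = p.2 := by
  have := hS.standardBorel
  have he : MeasurableEmbedding fun p : S => p.1.1 :=
    (measurable_fst.comp measurable_subtype_coe).measurableEmbedding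
      (Set.injOn_iff_injective.1 hinj)
  exact ⟨Function.extend (fun p : S => p.1.1) (fun p => p.1.2) fun _ => Classical.arbitrary Y,
    he.measurable_extend (measurable_snd.comp measurable_subtype_coe) measurable_const,
    fun p hp => he.injective.extend_apply _ _ ⟨p, hp⟩⟩

end Graph

end MeasureTheory

open MeasureTheory

section Transport

variable {Z : Type*} [MeasurableSpace Z] {c : Z → Z → ℝ≥0∞}

theorem otCost_le_lintegral_s17 {W : Type*} [MeasurableSpace W] {ρ : Measure W} {μ ν : Measure Z}
    {T₁ T₂ : W → Z} (hT₁ : Measurable T₁) (hT₂ : Measurable T₂) (h₁ : ρ.map T₁ = μ)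
    (h₂ : ρ.map T₂ = ν) : otCost c μ ν ≤ ∫⁻ w, c (T₁ w) (T₂ w) ∂ρ := by
  have hT : Measurable fun w => (T₁ w, T₂ w) := hT₁.prodMk hT₂
  refine (iInf₂_le (ρ.map fun w => (T₁ w, T₂ w)) ⟨?_, ?_⟩).trans (lintegral_map_le _ _)
  · rw [Measure.map_map measurable_fst hT]; exact h₁
  · rw [Measure.map_map measurable_snd hT]; exact h₂

theorem le_otCost {μ ν : Measure Z} {a : ℝ≥0∞}
    (h : ∀ π : Measure (Z × Z), π.map Prod.fst = μ → π.map Prod.snd = ν →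
      a ≤ ∫⁻ p, c p.1 p.2 ∂π) :
    a ≤ otCost c μ ν :=
  le_iInf₂ fun π hπ => h π hπ.1 hπ.2

theorem diamC_eq_lintegral_prod (hc : Measurable (Function.uncurry c)) (μ : Measure Z)
    [SFinite μ] : diamC c μ = ∫⁻ q, c q.1 q.2 ∂μ.prod μ :=
  (lintegral_prod _ hc.aemeasurable).symm

theorem diamC_map_eq_lintegral_prod {W : Type*} [MeasurableSpace W]
    (hc : Measurable (Function.uncurry c)) {f : W → Z} (hf : Measurable f) (μ : Measure W)
    [SFinite μ] : diamC c (μ.map f) = ∫⁻ q, c (f q.1) (f q.2) ∂μ.prod μ := by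
  rw [diamC_eq_lintegral_prod hc, Measure.map_prod_map _ _ hf hf]
  exact lintegral_map hc (hf.prodMap hf)

theorem lintegral_prod_comp_left {W : Type*} [MeasurableSpace W]
    (hc : Measurable (Function.uncurry c)) {f : W → Z} (hf : Measurable f) (μ : Measure W)
    [SFinite μ] (ν : Measure Z) [SFinite ν] :
    ∫⁻ q, c (f q.1) q.2 ∂μ.prod ν = ∫⁻ q, c q.1 q.2 ∂(μ.map f).prod ν := by
  conv_rhs => rw [← Measure.map_id (μ := ν)]
  rw [Measure.map_prod_map _ _ hf measurable_id]
  exact (lintegral_map hc (hf.prodMap measurable_id)).symm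

end Transport

section Dependency

variable {X Y : Type*} [MeasurableSpace X] [MeasurableSpace Y] {c : X × Y → X × Y → ℝ≥0∞}
  {cY : Y → Y → ℝ≥0∞} {γ : Measure (X × Y)}

theorem tdep_le_diamC [IsProbabilityMeasure γ] (hcY : Measurable (Function.uncurry cY))
    (hc : ∀ x y₁ y₂, c (x, y₁) (x, y₂) = cY y₁ y₂) : tdep c γ ≤ diamC cY (γ.map Prod.snd) := by
  set ν := γ.map Prod.snd
  have : IsProbabilityMeasure ν := Measure.isProbabilityMeasure_map measurable_snd.aemeasurable
  calc tdep c γ ≤ ∫⁻ p, c p.1 (p.1.1, p.2) ∂γ.prod ν :=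
        otCost_le_lintegral_s17 measurable_fst (measurable_fst.fst.prodMk measurable_snd) (by simp)
          (by
            have := Measure.map_prod_map γ ν measurable_fst measurable_id
            rw [Measure.map_id] at this
            exact this.symm)
    _ = ∫⁻ p, cY p.1.2 p.2 ∂γ.prod ν := lintegral_congr fun p => hc _ _ _
    _ = diamC cY ν := by
        rw [lintegral_prod_comp_left hcY measurable_snd, diamC_eq_lintegral_prod hcY]

theorem diamC_le_tdep_of_ae_graph [IsFiniteMeasure γ] (hcY : Measurable (Function.uncurry cY))
    {φ : X → Y} (hφ : Measurable φ) (hgraph : ∀ᵐ p ∂γ, φ p.1 = p.2) {A : Set X}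
    (hA : ∀ᵐ x ∂γ.map Prod.fst, x ∈ A)
    (hcost : ∀ x₁ ∈ A, ∀ x₂ ∈ A, ∀ y, cY (φ x₂) y ≤ c (x₁, φ x₁) (x₂, y)) :
    diamC cY (γ.map Prod.snd) ≤ tdep c γ := by
  have hν : γ.map Prod.snd = (γ.map Prod.fst).map φ := by
    rw [Measure.map_map hφ measurable_fst]
    exact Measure.map_congr (hgraph.mono fun p hp => hp.symm)
  refine le_otCost fun π hπ₁ hπ₂ => ?_
  have h₁ : ∀ᵐ pq ∂π, pq.1.1 ∈ A ∧ φ pq.1.1 = pq.1.2 := by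
    have := (ae_of_ae_map measurable_fst.aemeasurable hA).and hgraph
    rw [← hπ₁] at this
    exact ae_of_ae_map measurable_fst.aemeasurable this
  have h₂ : ∀ᵐ pq ∂π, pq.2.1 ∈ A := by
    have := (Measure.quasiMeasurePreserving_fst (ν := γ.map Prod.snd)).ae hA
    rw [← hπ₂] at this
    exact ae_of_ae_map measurable_snd.aemeasurable this
  calc diamC cY (γ.map Prod.snd)
      = ∫⁻ q, cY (φ q.1) q.2 ∂(γ.map Prod.fst).prod (γ.map Prod.snd) := by
        rw [lintegral_prod_comp_left hcY hφ, ← hν, diamC_eq_lintegral_prod hcY]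
    _ = ∫⁻ pq, cY (φ pq.2.1) pq.2.2 ∂π := by
        rw [← hπ₂]
        exact lintegral_map (hcY.comp ((hφ.comp measurable_fst).prodMk measurable_snd))
          measurable_snd
    _ ≤ ∫⁻ pq, c pq.1 pq.2 ∂π := by
        refine lintegral_mono_ae ((h₁.and h₂).mono fun pq ⟨⟨hx₁, hgr⟩, hx₂⟩ => ?_)
        have := hcost _ hx₁ _ hx₂ pq.2.2
        rwa [hgr] at this

theorem ae_le_of_diamC_le_tdep [IsProbabilityMeasure γ] {cX : X → X → ℝ≥0∞}
    (hcX_meas : Measurable (Function.uncurry cX)) (hcY_meas : Measurable (Function.uncurry cY))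
    (hcX_symm : ∀ x₁ x₂, cX x₁ x₂ = cX x₂ x₁) (hcY_symm : ∀ y₁ y₂, cY y₁ y₂ = cY y₂ y₁)
    (hcX : ∀ x₁ x₂ y, c (x₁, y) (x₂, y) = cX x₁ x₂)
    (hcY : ∀ x y₁ y₂, c (x, y₁) (x, y₂) = cY y₁ y₂)
    (hfin : diamC cY (γ.map Prod.snd) ≠ ∞) (hle : diamC cY (γ.map Prod.snd) ≤ tdep c γ) :
    ∀ᵐ pq ∂γ.prod γ, cY pq.1.2 pq.2.2 ≤ cX pq.1.1 pq.2.1 := by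
  classical
  have hcXm : Measurable fun pq : (X × Y) × (X × Y) => cX pq.1.1 pq.2.1 :=
    hcX_meas.comp (measurable_fst.fst.prodMk measurable_snd.fst)
  have hcYm : Measurable fun pq : (X × Y) × (X × Y) => cY pq.1.2 pq.2.2 :=
    hcY_meas.comp (measurable_fst.snd.prodMk measurable_snd.snd)
  set M : Set ((X × Y) × (X × Y)) := {pq | cX pq.1.1 pq.2.1 < cY pq.1.2 pq.2.2}
  have hM : MeasurableSet M := measurableSet_lt hcXm hcYm
  have hswapM : Prod.swap ⁻¹' M = M := by
    ext pq
    simp only [M, Set.mem_preimage, Set.mem_ofPred_eq, Prod.fst_swap, Prod.snd_swap]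
    rw [hcX_symm, hcY_symm]
  have hf : Measurable (Prod.map Prod.fst Prod.snd : (X × Y) × (X × Y) → X × Y) :=
    measurable_fst.prodMap measurable_snd
  -- the exchanged target: `(x₂, y₁)` on `M`, `(x₁, y₂)` off `M`
  set F := M.piecewise (Prod.map Prod.fst Prod.snd ∘ Prod.swap) (Prod.map Prod.fst Prod.snd)
  have hF : (γ.prod γ).map F = (γ.map Prod.fst).prod (γ.map Prod.snd) := by
    rw [Measure.map_piecewise_comp_eq_map measurable_swap Measure.prod_swap hM hswapM hf,
      Measure.map_prod_map _ _ measurable_fst measurable_snd]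
  have hcost : ∀ pq, c pq.1 (F pq) = min (cX pq.1.1 pq.2.1) (cY pq.1.2 pq.2.2) := by
    intro pq
    by_cases hpq : cX pq.1.1 pq.2.1 < cY pq.1.2 pq.2.2
    · rw [show F pq = _ from Set.piecewise_eq_of_mem M _ _ hpq]
      exact (hcX _ _ _).trans (min_eq_left hpq.le).symm
    · rw [show F pq = _ from Set.piecewise_eq_of_notMem M _ _ hpq]
      exact (hcY _ _ _).trans (min_eq_right (not_lt.1 hpq)).symm
  have hD := diamC_map_eq_lintegral_prod hcY_meas measurable_snd γ
  have hτ : tdep c γ ≤ ∫⁻ pq, min (cX pq.1.1 pq.2.1) (cY pq.1.2 pq.2.2) ∂γ.prod γ := by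
    simp_rw [← hcost]
    exact otCost_le_lintegral_s17 measurable_fst ((hf.comp measurable_swap).piecewise hM hf)
      (by simp) hF
  have hmin_eq := ae_eq_of_ae_le_of_lintegral_le (ae_of_all _ fun pq => min_le_right _ _)
    (ne_top_of_le_ne_top hfin (hD ▸ lintegral_mono fun _ => min_le_right _ _))
    hcYm.aemeasurable (hD ▸ hle.trans hτ)
  exact hmin_eq.mono fun pq hpq => min_eq_right_iff.1 hpq

end Dependency

theorem exists_contracting_graph_of_support {X Y : Type*} [TopologicalSpace X] [PolishSpace X]
    [MeasurableSpace X] [BorelSpace X] [TopologicalSpace Y] [PolishSpace Y] [MeasurableSpace Y]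
    [BorelSpace Y] {kX : X → X → ℝ≥0∞} {dY : Y → Y → ℝ≥0∞} (hkX_diag : ∀ x, kX x x = 0)
    (hdY_pos : ∀ y₁ y₂, y₁ ≠ y₂ → 0 < dY y₁ y₂) {γ : Measure (X × Y)} [IsProbabilityMeasure γ]
    (hS : ∀ p ∈ γ.support, ∀ q ∈ γ.support, dY p.2 q.2 ≤ kX p.1 q.1) :
    ∃ φ : X → Y, Measurable φ ∧ γ = (γ.map Prod.fst).map (fun x => (x, φ x)) ∧
      ∃ A : Set X, MeasurableSet A ∧ (γ.map Prod.fst) A = 1 ∧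
        ∀ x₁ ∈ A, ∀ x₂ ∈ A, dY (φ x₁) (φ x₂) ≤ kX x₁ x₂ := by
  have hinj : γ.support.InjOn Prod.fst := fun p hp q hq hpq => Prod.ext hpq <|
    by_contra fun hne => (hdY_pos _ _ hne).not_ge (by simpa [hpq, hkX_diag] using hS p hp q hq)
  have hSm : MeasurableSet γ.support := Measure.isClosed_support.measurableSet
  have : Nonempty Y := (nonempty_of_isProbabilityMeasure γ).map Prod.snd
  have : IsProbabilityMeasure (γ.map Prod.fst) :=
    Measure.isProbabilityMeasure_map measurable_fst.aemeasurable
  obtain ⟨φ, hφ, hφS⟩ := exists_measurable_eq_snd_of_injOn_fst hSm hinj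
  have hA := hSm.image_of_measurable_injOn measurable_fst hinj
  refine ⟨φ, hφ, ((map_fst_map_graph_eq_self_iff hφ).2
    (Filter.Eventually.mono (Measure.support_mem_ae (μ := γ)) hφS)).symm, _, hA, ?_, ?_⟩
  · rw [← prob_compl_eq_zero_iff hA, Measure.map_apply measurable_fst hA.compl]
    exact measure_mono_null (fun p hp hpS => hp ⟨p, hpS, rfl⟩) Measure.measure_compl_support
  · rintro _ ⟨p, hp, rfl⟩ _ ⟨q, hq, rfl⟩
    rw [hφS p hp, hφS q hq]
    exact hS p hp q hq

theorem tdep_eq_diam_iff_contraction_general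
    {X Y : Type*} [TopologicalSpace X] [PolishSpace X] [MeasurableSpace X] [BorelSpace X]
    [TopologicalSpace Y] [PolishSpace Y] [MeasurableSpace Y] [BorelSpace Y]
    (kX : X → X → ℝ≥0∞)
    (hkX_cont : Continuous (Function.uncurry kX))
    (hkX_symm : ∀ x₁ x₂, kX x₁ x₂ = kX x₂ x₁)
    (hkX_diag : ∀ x, kX x x = 0)
    (dY : Y → Y → ℝ≥0∞)
    (hdY_cont : Continuous (Function.uncurry dY))
    (hdY_symm : ∀ y₁ y₂, dY y₁ y₂ = dY y₂ y₁)
    (hdY_diag : ∀ y, dY y y = 0)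
    (hdY_triangle : ∀ y₁ y₂ y₃, dY y₁ y₃ ≤ dY y₁ y₂ + dY y₂ y₃)
    (hdY_pos : ∀ y₁ y₂, y₁ ≠ y₂ → 0 < dY y₁ y₂)
    (h : ℝ≥0∞ → ℝ≥0∞) (hh_cont : Continuous h) (hh_mono : StrictMono h)
    (c : X × Y → X × Y → ℝ≥0∞)
    (hc : ∀ z₁ z₂ : X × Y, c z₁ z₂ = h (kX z₁.1 z₂.1 + dY z₁.2 z₂.2))
    (γ : Measure (X × Y)) [IsProbabilityMeasure γ]
    (hdiam : diamC (fun y₁ y₂ => h (dY y₁ y₂)) (γ.map Prod.snd) ≠ ∞) :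
    tdep c γ = diamC (fun y₁ y₂ => h (dY y₁ y₂)) (γ.map Prod.snd) ↔
      ∃ φ : X → Y, Measurable φ ∧
        γ = (γ.map Prod.fst).map (fun x => (x, φ x)) ∧
        ∃ A : Set X, MeasurableSet A ∧ (γ.map Prod.fst) A = 1 ∧
          ∀ x₁ ∈ A, ∀ x₂ ∈ A, dY (φ x₁) (φ x₂) ≤ kX x₁ x₂ := by
  have hcX_cont : Continuous (Function.uncurry fun x₁ x₂ => h (kX x₁ x₂)) :=
    hh_cont.comp hkX_cont
  have hcY_cont : Continuous (Function.uncurry fun y₁ y₂ => h (dY y₁ y₂)) :=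
    hh_cont.comp hdY_cont
  have hcX : ∀ x₁ x₂ y, c (x₁, y) (x₂, y) = h (kX x₁ x₂) := by simp [hc, hdY_diag]
  have hcY : ∀ x y₁ y₂, c (x, y₁) (x, y₂) = h (dY y₁ y₂) := by simp [hc, hkX_diag]
  constructor
  · intro hτ
    have hae := ae_le_of_diamC_le_tdep hcX_cont.measurable hcY_cont.measurable
      (fun x₁ x₂ => by rw [hkX_symm]) (fun y₁ y₂ => by rw [hdY_symm]) hcX hcY hdiam hτ.ge
    have hclosed :
        IsClosed {pq : (X × Y) × (X × Y) | h (dY pq.1.2 pq.2.2) ≤ h (kX pq.1.1 pq.2.1)} :=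
      isClosed_le (hcY_cont.comp (continuous_fst.snd.prodMk continuous_snd.snd))
        (hcX_cont.comp (continuous_fst.fst.prodMk continuous_snd.fst))
    refine exists_contracting_graph_of_support hkX_diag hdY_pos fun p hp q hq => ?_
    exact hh_mono.le_iff_le.1 <| Measure.support_subset_of_isClosed hclosed hae
      (Measure.support_prod_support_subset γ γ (Set.mk_mem_prod hp hq))
  · rintro ⟨φ, hφ, hγ, A, hA, hμA, hφA⟩
    have : IsProbabilityMeasure (γ.map Prod.fst) :=
      Measure.isProbabilityMeasure_map measurable_fst.aemeasurable
    refine le_antisymm (tdep_le_diamC hcY_cont.measurable hcY)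
      (diamC_le_tdep_of_ae_graph hcY_cont.measurable hφ
        ((map_fst_map_graph_eq_self_iff hφ).1 hγ.symm)
        (mem_ae_iff.2 ((prob_compl_eq_zero_iff hA).2 hμA)) fun x₁ hx₁ x₂ hx₂ y => ?_)
    rw [hc]
    refine hh_mono.monotone ?_
    calc dY (φ x₂) y ≤ dY (φ x₂) (φ x₁) + dY (φ x₁) y := hdY_triangle _ _ _
      _ ≤ kX x₁ x₂ + dY (φ x₁) y := by
        gcongr
        rw [hdY_symm]
        exact hφA x₁ hx₁ x₂ hx₂

/-- For continuous additive costs `c = h(k_X + d_Y)` with `d_Y` a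
continuous metric, `τ_c(γ) = diam_{c_Y} ν` if and only if `γ = (id, φ)_*μ` for a
μ-almost surely contracting measurable map `φ : X → Y`. -/
theorem tdep_eq_diam_iff_contraction
    {X Y : Type*} [TopologicalSpace X] [PolishSpace X] [MeasurableSpace X] [BorelSpace X]
    [TopologicalSpace Y] [PolishSpace Y] [MeasurableSpace Y] [BorelSpace Y]
    (kX : X → X → ℝ≥0∞)
    (hkX_cont : Continuous (Function.uncurry kX))
    (hkX_symm : ∀ x₁ x₂, kX x₁ x₂ = kX x₂ x₁)
    (hkX_diag : ∀ x, kX x x = 0)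
    (dY : Y → Y → ℝ≥0∞)
    (hdY_cont : Continuous (Function.uncurry dY))
    (hdY_symm : ∀ y₁ y₂, dY y₁ y₂ = dY y₂ y₁)
    (hdY_diag : ∀ y, dY y y = 0)
    (hdY_triangle : ∀ y₁ y₂ y₃, dY y₁ y₃ ≤ dY y₁ y₂ + dY y₂ y₃)
    (hdY_pos : ∀ y₁ y₂, y₁ ≠ y₂ → 0 < dY y₁ y₂)
    (h : ℝ≥0∞ → ℝ≥0∞) (hh_cont : Continuous h) (hh_mono : StrictMono h)
    (hh_zero : h 0 = 0)
    (c : X × Y → X × Y → ℝ≥0∞)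
    (hc : ∀ z₁ z₂ : X × Y, c z₁ z₂ = h (kX z₁.1 z₂.1 + dY z₁.2 z₂.2))
    (γ : Measure (X × Y)) [IsProbabilityMeasure γ]
    (hdiam : diamC (fun y₁ y₂ => h (dY y₁ y₂)) (γ.map Prod.snd) ≠ ∞) :
    tdep c γ = diamC (fun y₁ y₂ => h (dY y₁ y₂)) (γ.map Prod.snd) ↔
      ∃ φ : X → Y, Measurable φ ∧
        γ = (γ.map Prod.fst).map (fun x => (x, φ x)) ∧
        ∃ A : Set X, MeasurableSet A ∧ (γ.map Prod.fst) A = 1 ∧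
          ∀ x₁ ∈ A, ∀ x₂ ∈ A, dY (φ x₁) (φ x₂) ≤ kX x₁ x₂ :=
  tdep_eq_diam_iff_contraction_general kX hkX_cont hkX_symm hkX_diag dY hdY_cont hdY_symm hdY_diag
    hdY_triangle hdY_pos h hh_cont hh_mono c hc γ hdiam
end
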